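/- arXiv:math/0407185 — 4 statements merged into one kernel-verified Lean document; each statement's English description precedes it below -/
import Mathlib

section
/- Let G be a graph whose vertex set is partitioned as V = S ∪ S̄, let v ∈ S, and consider independent bond percolation on G. Suppose that for every edge e crossing the cut (S, S̄), the probability that v is connected to an endpoint of e by an open path lying entirely inside S is at most η. If u ∈ S̄, then for any (possibly adaptive) local routing algorithm that probes edges starting from u and only probes edges incident to vertices already reached from u by open paths, the probability that the algorithm finds an open path from u to v using fewer than t probes, conditioned on u being connected to v, is at most tη / Pr[u ∼ v]. -/
open MeasureTheory ProbabilityTheory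
open scoped ENNReal

/-- Bernoulli measure on `Bool` with parameter `p` (truncated to `[0,1]`). -/
noncomputable def bern (p : ℝ) : Measure Bool :=
  (PMF.bernoulli (min (Real.toNNReal p) 1) (min_le_right _ _)).toMeasure

instance (p : ℝ) : IsProbabilityMeasure (bern p) := by
  unfold bern; infer_instance

/-- Independent percolation: product Bernoulli measure on configurations indexed by `E`. -/
noncomputable def perc (E : Type*) [Fintype E] (p : ℝ) : Measure (E → Bool) :=
  Measure.pi fun _ => bern p

variable {V : Type*}

/-- `x` and `y` are joined by an open path all of whose vertices lie in `S`. -/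
def OpenConnOn (G : SimpleGraph V) (ω : Sym2 V → Bool) (S : Set V) (x y : V) : Prop :=
  ∃ w : G.Walk x y, (∀ e ∈ w.edges, ω e = true) ∧ ∀ z ∈ w.support, z ∈ S

/-- `x` and `y` are joined by an open path. -/
def OpenConn (G : SimpleGraph V) (ω : Sym2 V → Bool) (x y : V) : Prop :=
  ∃ w : G.Walk x y, ∀ e ∈ w.edges, ω e = true

/-- A (deterministic, adaptive) routing algorithm: given the history of probed
edges together with their observed status, it chooses the next edge to probe. -/
structure Alg (V : Type*) where
  next : List (Sym2 V × Bool) → Sym2 V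

/-- The history (list of probed edges with their status) after `t` probes. -/
def Alg.hist (A : Alg V) (ω : Sym2 V → Bool) : ℕ → List (Sym2 V × Bool)
  | 0 => []
  | t + 1 => (A.next (A.hist ω t), ω (A.next (A.hist ω t))) :: A.hist ω t

/-- The set of edges probed and found open within the first `t` probes. -/
def Alg.probedOpen (A : Alg V) (ω : Sym2 V → Bool) (t : ℕ) : Set (Sym2 V) :=
  {e | (e, true) ∈ A.hist ω t}

/-- Vertices reachable from `u` using only edges in the set `F`. -/
def reachedFrom (G : SimpleGraph V) (u : V) (F : Set (Sym2 V)) : Set V :=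
  {x | ∃ w : G.Walk u x, ∀ e ∈ w.edges, e ∈ F}

/-- A local routing algorithm only probes edges incident to a vertex already
reached from `u` by probed open edges. -/
def Alg.IsLocal (A : Alg V) (G : SimpleGraph V) (u : V) : Prop :=
  ∀ ω t, ∃ x, x ∈ reachedFrom G u (A.probedOpen ω t) ∧ x ∈ A.next (A.hist ω t)

/-- The algorithm has succeeded within `t` probes: it has certified an open
path from `u` to `v` (all of whose edges were probed and found open). -/
def Alg.SucceedsBy (A : Alg V) (G : SimpleGraph V) (ω : Sym2 V → Bool) (u v : V) (t : ℕ) : Prop :=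
  ∃ w : G.Walk u v, ∀ e ∈ w.edges, e ∈ A.probedOpen ω t

/-!
Call the probe at step `i` good if it is an edge of the cut `(S, S̄)` whose `S`-side is joined
to `v` by an open path inside `S`. If the algorithm has certified an open path from `u ∉ S` to
`v ∈ S`, the last cut edge on that path was probed, and that probe was good.

Fix the history before the first good probe, at step `i`. It determines the probed edge `e`, and
the open path inside `S` from `v` to `e` avoids every earlier probed edge: by locality such an
edge touches a vertex already reached from `u`, which would have produced an earlier good probe.
So the first good probe at step `i` requires an event that depends only on unprobed edges, hence
is independent of the history, and has probability at most `η`. Summing over histories and over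
`i < t` bounds the probability of success before `t` by `t η`.
-/

section Independence

variable {ι : Type*} {Ω : ι → Type*}

theorem Set.preimage_image_domRestrict_of_dependsOn {H : Set (∀ i, Ω i)} {s : Set ι}
    (hH : DependsOn (· ∈ H) s) : s.domRestrict ⁻¹' (s.domRestrict '' H) = H := by
  refine Set.Subset.antisymm ?_ (Set.subset_preimage_image _ _)
  rintro ω ⟨ω₀, hω₀, hrestrict⟩
  have hagree : ∀ i ∈ s, ω₀ i = ω i := fun i hi => congrFun hrestrict ⟨i, hi⟩
  exact (hH hagree).mp hω₀

variable [Fintype ι] [∀ i, MeasurableSpace (Ω i)] [∀ i, MeasurableSingletonClass (Ω i)]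
  [∀ i, Countable (Ω i)]

theorem measure_pi_inter_eq_mul_of_dependsOn (μ : ∀ i, Measure (Ω i))
    [∀ i, IsProbabilityMeasure (μ i)] {H C : Set (∀ i, Ω i)} {F : Finset ι}
    (hH : DependsOn (· ∈ H) F) (hC : DependsOn (· ∈ C) (↑F)ᶜ) :
    Measure.pi μ (H ∩ C) = Measure.pi μ H * Measure.pi μ C := by
  classical
  rw [← Finset.coe_compl] at hC
  have hind := (iIndepFun_pi (μ := μ) (X := fun _ x => x) fun _ => aemeasurable_id)
    |>.indepFun_finset F Fᶜ disjoint_compl_right fun i => measurable_pi_apply i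
  have := hind.measure_inter_preimage_eq_mul _ _
    (MeasurableSet.of_discrete (s := (F : Set ι).domRestrict '' H))
    (MeasurableSet.of_discrete (s := ((Fᶜ : Finset ι) : Set ι).domRestrict '' C))
  have hH' : (fun ω (i : F) => ω i) ⁻¹' ((F : Set ι).domRestrict '' H) = H :=
    Set.preimage_image_domRestrict_of_dependsOn hH
  have hC' :
      (fun ω (i : ↥Fᶜ) => ω i) ⁻¹' (((Fᶜ : Finset ι) : Set ι).domRestrict '' C) = C :=
    Set.preimage_image_domRestrict_of_dependsOn hC
  rwa [hH', hC'] at this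

end Independence

theorem measure_le_of_forall_inter_fiber_le {Ω β : Type*} [MeasurableSpace Ω] {μ : Measure Ω}
    [IsProbabilityMeasure μ] (f : Ω → β) (s : Finset β) (hfs : ∀ ω, f ω ∈ s)
    (hf : ∀ b ∈ s, MeasurableSet (f ⁻¹' {b})) {T : Set Ω} {η : ℝ≥0∞}
    (hT : ∀ b ∈ s, μ (T ∩ f ⁻¹' {b}) ≤ μ (f ⁻¹' {b}) * η) : μ T ≤ η := by
  have hcover : T ⊆ ⋃ b ∈ s, T ∩ f ⁻¹' {b} := fun ω hω =>
    Set.mem_biUnion (hfs ω) ⟨hω, rfl⟩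
  calc μ T ≤ ∑ b ∈ s, μ (T ∩ f ⁻¹' {b}) :=
        (measure_mono hcover).trans (measure_biUnion_finset_le _ _)
    _ ≤ ∑ b ∈ s, μ (f ⁻¹' {b}) * η := Finset.sum_le_sum hT
    _ = μ (f ⁻¹' s) * η := by rw [← Finset.sum_mul, sum_measure_preimage_singleton s hf]
    _ ≤ η := mul_le_of_le_one_left' prob_le_one

instance (E : Type*) [Fintype E] (p : ℝ) : IsProbabilityMeasure (perc E p) := by
  unfold perc; infer_instance

namespace SimpleGraph.Walk

variable {V : Type*} {G : SimpleGraph V} {S : Set V} {ω : Sym2 V → Bool}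

theorem exists_crossing_openConnOn {a b : V} (w : G.Walk a b) (hw : ∀ e ∈ w.edges, ω e = true)
    (ha : a ∈ S) (hb : b ∉ S) :
    ∃ x y, s(x, y) ∈ w.edges ∧ x ∈ S ∧ y ∉ S ∧ OpenConnOn G ω S a x := by
  induction w with
  | nil => exact absurd ha hb
  | @cons a c b hac q ih =>
    by_cases hc : c ∈ S
    · obtain ⟨x, y, hxy, hx, hy, q', hq'open, hq'S⟩ :=
        ih (fun e he => hw e (List.mem_cons_of_mem _ he)) hc hb
      refine ⟨x, y, List.mem_cons_of_mem _ hxy, hx, hy, cons hac q', ?_, ?_⟩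
      · simpa using ⟨hw _ (List.mem_cons_self ..), hq'open⟩
      · simpa [ha] using hq'S
    · exact ⟨a, c, List.mem_cons_self .., ha, hc, nil, by simp, by simpa using ha⟩

theorem openConnOn_of_mem_support {a b c : V} (w : G.Walk a b) (hw : ∀ e ∈ w.edges, ω e = true)
    (hS : ∀ z ∈ w.support, z ∈ S) (hc : c ∈ w.support) : OpenConnOn G ω S a c := by
  classical
  exact ⟨w.takeUntil c hc, fun e he => hw e (w.edges_takeUntil_subset_edges hc he),
    fun z hz => hS z (w.support_takeUntil_subset_support hc hz)⟩

end SimpleGraph.Walk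

theorem OpenConnOn.trans {V : Type*} {G : SimpleGraph V} {ω : Sym2 V → Bool} {S : Set V}
    {a b c : V} (hab : OpenConnOn G ω S a b) (hbc : OpenConnOn G ω S b c) :
    OpenConnOn G ω S a c := by
  obtain ⟨w₁, ho₁, hs₁⟩ := hab
  obtain ⟨w₂, ho₂, hs₂⟩ := hbc
  refine ⟨w₁.append w₂, fun e he => ?_, fun z hz => ?_⟩
  · rw [SimpleGraph.Walk.edges_append, List.mem_append] at he
    exact he.elim (ho₁ e) (ho₂ e)
  · rw [SimpleGraph.Walk.mem_support_append_iff] at hz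
    exact hz.elim (hs₁ z) (hs₂ z)

namespace Alg

variable {V : Type*} (A : Alg V)

/-- The edge probed at step `i`, right after the `i` probes recorded in `A.hist ω i`. -/
def probe (ω : Sym2 V → Bool) (i : ℕ) : Sym2 V := A.next (A.hist ω i)

variable {A} {ω ω' : Sym2 V → Bool}

theorem mem_hist_iff {i : ℕ} {r : Sym2 V × Bool} :
    r ∈ A.hist ω i ↔ ∃ j < i, r = (A.probe ω j, ω (A.probe ω j)) := by
  induction i with
  | zero => simp [hist]
  | succ i ih =>
    simp only [hist, List.mem_cons, ih, Nat.lt_succ_iff_lt_or_eq, or_and_right, exists_or,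
      exists_eq_left, probe]
    exact or_comm

theorem mem_probedOpen_iff {k : ℕ} {e : Sym2 V} :
    e ∈ A.probedOpen ω k ↔ ∃ j < k, A.probe ω j = e ∧ ω e = true := by
  simp only [probedOpen, Set.mem_ofPred_eq, mem_hist_iff, Prod.mk.injEq]
  refine exists_congr fun j => and_congr_right fun _ => ?_
  constructor <;> rintro ⟨rfl, h⟩ <;> exact ⟨rfl, h.symm⟩

theorem hist_congr {i : ℕ} (h : ∀ j < i, ω (A.probe ω j) = ω' (A.probe ω j)) :
    A.hist ω' i = A.hist ω i := by
  induction i with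
  | zero => rfl
  | succ i ih =>
    have hi := ih fun j hj => h j (hj.trans i.lt_succ_self)
    have hlast := h i i.lt_succ_self
    rw [probe] at hlast
    rw [hist, hist, hi, hlast]

theorem dependsOn_hist_eq [DecidableEq V] (i : ℕ) (h : List (Sym2 V × Bool)) :
    DependsOn (fun ω => A.hist ω i = h) ↑(h.map Prod.fst).toFinset := by
  have hist_eq_of_agree : ∀ ω ω' : Sym2 V → Bool, (∀ e ∈ h.map Prod.fst, ω e = ω' e) →
      A.hist ω i = h → A.hist ω' i = h := by
    intro ω ω' hagree hωh
    rw [← hωh]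
    refine hist_congr fun j hj => hagree _ ?_
    have hj_mem : (A.probe ω j, ω (A.probe ω j)) ∈ h :=
      hωh ▸ mem_hist_iff.2 ⟨j, hj, rfl⟩
    exact List.mem_map_of_mem hj_mem
  intro ω ω' hagree
  simp only [List.coe_toFinset] at hagree
  exact propext
    ⟨hist_eq_of_agree ω ω' hagree, hist_eq_of_agree ω' ω fun e he => (hagree e he).symm⟩

end Alg

section Routing

variable {V : Type*} {G : SimpleGraph V} {S : Set V} {u v : V} {A : Alg V}
  {ω ω' : Sym2 V → Bool}

def IsCutEdge (G : SimpleGraph V) (S : Set V) (e : Sym2 V) : Prop :=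
  e ∈ G.edgeSet ∧ ∃ x y : V, e = s(x, y) ∧ x ∈ S ∧ y ∉ S

def Alg.GoodProbe (A : Alg V) (G : SimpleGraph V) (S : Set V) (v : V) (ω : Sym2 V → Bool)
    (i : ℕ) : Prop :=
  IsCutEdge G S (A.probe ω i) ∧ ∃ x ∈ A.probe ω i, OpenConnOn G ω S v x

def Alg.IsFirstGoodProbe (A : Alg V) (G : SimpleGraph V) (S : Set V) (v : V)
    (ω : Sym2 V → Bool) (i : ℕ) : Prop :=
  A.GoodProbe G S v ω i ∧ ∀ j < i, ¬ A.GoodProbe G S v ω j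

def OpenConnOnAvoiding (G : SimpleGraph V) (ω : Sym2 V → Bool) (S : Set V) (F : Set (Sym2 V))
    (x y : V) : Prop :=
  ∃ w : G.Walk x y, (∀ e ∈ w.edges, ω e = true ∧ e ∉ F) ∧ ∀ z ∈ w.support, z ∈ S

theorem OpenConnOnAvoiding.openConnOn {F : Set (Sym2 V)} {x y : V}
    (h : OpenConnOnAvoiding G ω S F x y) : OpenConnOn G ω S x y :=
  let ⟨w, hw, hS⟩ := h
  ⟨w, fun e he => (hw e he).1, hS⟩

theorem OpenConnOnAvoiding.congr {F : Set (Sym2 V)} {x y : V} (hagree : ∀ e ∉ F, ω e = ω' e)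
    (h : OpenConnOnAvoiding G ω S F x y) : OpenConnOnAvoiding G ω' S F x y :=
  let ⟨w, hw, hS⟩ := h
  ⟨w, fun e he => ⟨hagree e (hw e he).2 ▸ (hw e he).1, (hw e he).2⟩, hS⟩

/-- The good probe is the last cut edge on the probed path from `u` to `a`. -/
theorem Alg.exists_goodProbe_lt_of_mem_reachedFrom {k : ℕ} {a : V} (hu : u ∉ S)
    (ha : a ∈ reachedFrom G u (A.probedOpen ω k)) (hva : OpenConnOn G ω S v a) :
    ∃ j < k, A.GoodProbe G S v ω j := by
  obtain ⟨W, hW⟩ := ha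
  have hWopen : ∀ e ∈ W.reverse.edges, ω e = true := fun e he => by
    obtain ⟨-, -, -, hopen⟩ := Alg.mem_probedOpen_iff.1 (hW e (by simpa using he))
    exact hopen
  have haS : a ∈ S := let ⟨w, _, hwS⟩ := hva; hwS a w.end_mem_support
  obtain ⟨x, y, hxy, hx, hy, hax⟩ := W.reverse.exists_crossing_openConnOn hWopen haS hu
  obtain ⟨j, hjk, hje, -⟩ := Alg.mem_probedOpen_iff.1 (hW _ (by simpa using hxy))
  refine ⟨j, hjk, ⟨?_, x, y, hje, hx, hy⟩, x, hje ▸ Sym2.mem_mk_left x y, hva.trans hax⟩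
  exact hje ▸ W.edges_subset_edgeSet (by simpa using hxy)

theorem Alg.exists_goodProbe_lt_of_succeedsBy {s : ℕ} (hu : u ∉ S) (hv : v ∈ S)
    (h : A.SucceedsBy G ω u v s) : ∃ j < s, A.GoodProbe G S v ω j :=
  A.exists_goodProbe_lt_of_mem_reachedFrom hu h ⟨.nil, by simp, by simpa using hv⟩

/-- By locality, an earlier probed edge on the connection would give an earlier good probe. -/
theorem Alg.IsFirstGoodProbe.exists_openConnOnAvoiding {i : ℕ} (hA : A.IsLocal G u)
    (hu : u ∉ S) (h : A.IsFirstGoodProbe G S v ω i) :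
    ∃ x ∈ A.probe ω i,
      OpenConnOnAvoiding G ω S {e | e ∈ (A.hist ω i).map Prod.fst} v x := by
  obtain ⟨⟨-, x, hx, w, hwopen, hwS⟩, hfirst⟩ := h
  refine ⟨x, hx, w, fun f hf => ⟨hwopen f hf, fun hfF => ?_⟩, hwS⟩
  obtain ⟨r, hr, rfl⟩ := List.mem_map.1 hfF
  obtain ⟨k, hki, rfl⟩ := Alg.mem_hist_iff.1 hr
  obtain ⟨a, ha, hak⟩ := hA ω k
  have hva := w.openConnOn_of_mem_support hwopen hwS (w.mem_support_of_mem_edges hf hak)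
  obtain ⟨j, hjk, hj⟩ := A.exists_goodProbe_lt_of_mem_reachedFrom hu ha hva
  exact hfirst j (hjk.trans hki) hj

end Routing

section Bound

variable {V : Type*} [Fintype V] [DecidableEq V] {G : SimpleGraph V} {p : ℝ} {S : Set V}
  {u v : V} {η : ℝ≥0∞} {A : Alg V}

/-- The history fixes the probed edge and the connection to it avoids the probed edges, so the
event it needs is independent of the history. -/
theorem perc_isFirstGoodProbe_inter_hist_eq_le
    (hη : ∀ e, IsCutEdge G S e →
      perc (Sym2 V) p {ω | ∃ x ∈ e, OpenConnOn G ω S v x} ≤ η)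
    (hA : A.IsLocal G u) (hu : u ∉ S) (i : ℕ) (h : List (Sym2 V × Bool)) :
    perc (Sym2 V) p ({ω | A.IsFirstGoodProbe G S v ω i} ∩ {ω | A.hist ω i = h}) ≤
      perc (Sym2 V) p {ω | A.hist ω i = h} * η := by
  by_cases hcut : IsCutEdge G S (A.next h)
  · set F := (h.map Prod.fst).toFinset
    set C := {ω | ∃ x ∈ A.next h, OpenConnOnAvoiding G ω S F v x}
    have hsub : {ω | A.IsFirstGoodProbe G S v ω i} ∩ {ω | A.hist ω i = h} ⊆
        {ω | A.hist ω i = h} ∩ C := by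
      rintro ω ⟨hfirst, hωh⟩
      obtain ⟨x, hx, hvx⟩ := hfirst.exists_openConnOnAvoiding hA hu
      rw [Alg.probe, hωh] at hx
      rw [hωh] at hvx
      exact ⟨hωh, x, hx, by simpa [F] using hvx⟩
    have hC : DependsOn (· ∈ C) (↑F)ᶜ := fun ω ω' hagree => propext
      ⟨fun ⟨x, hx, hvx⟩ => ⟨x, hx, hvx.congr hagree⟩,
        fun ⟨x, hx, hvx⟩ => ⟨x, hx, hvx.congr fun e he => (hagree e he).symm⟩⟩
    calc _ ≤ perc (Sym2 V) p ({ω | A.hist ω i = h} ∩ C) := measure_mono hsub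
      _ = perc (Sym2 V) p {ω | A.hist ω i = h} * perc (Sym2 V) p C :=
        measure_pi_inter_eq_mul_of_dependsOn _ (A.dependsOn_hist_eq i h) hC
      _ ≤ perc (Sym2 V) p {ω | A.hist ω i = h} * η := by
        gcongr
        refine le_trans (measure_mono ?_) (hη _ hcut)
        rintro ω ⟨x, hx, hvx⟩
        exact ⟨x, hx, hvx.openConnOn⟩
  · have hempty : {ω | A.IsFirstGoodProbe G S v ω i} ∩ {ω | A.hist ω i = h} = ∅ := by
      refine Set.eq_empty_of_forall_notMem fun ω ⟨⟨⟨hcut', _⟩, _⟩, hωh⟩ => hcut ?_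
      rwa [Alg.probe, hωh] at hcut'
    simp [hempty]

theorem perc_isFirstGoodProbe_le
    (hη : ∀ e, IsCutEdge G S e →
      perc (Sym2 V) p {ω | ∃ x ∈ e, OpenConnOn G ω S v x} ≤ η)
    (hA : A.IsLocal G u) (hu : u ∉ S) (i : ℕ) :
    perc (Sym2 V) p {ω | A.IsFirstGoodProbe G S v ω i} ≤ η :=
  measure_le_of_forall_inter_fiber_le (fun ω => A.hist ω i) (Finset.univ.image _)
    (fun ω => Finset.mem_image_of_mem _ (Finset.mem_univ ω)) (fun _ _ => .of_discrete)
    fun h _ => perc_isFirstGoodProbe_inter_hist_eq_le hη hA hu i h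

theorem perc_exists_succeedsBy_lt_le
    (hη : ∀ e, IsCutEdge G S e →
      perc (Sym2 V) p {ω | ∃ x ∈ e, OpenConnOn G ω S v x} ≤ η)
    (hA : A.IsLocal G u) (hu : u ∉ S) (hv : v ∈ S) (t : ℕ) :
    perc (Sym2 V) p {ω | ∃ s < t, A.SucceedsBy G ω u v s} ≤ t * η := by
  classical
  have hsub : {ω | ∃ s < t, A.SucceedsBy G ω u v s} ⊆
      ⋃ i ∈ Finset.range t, {ω | A.IsFirstGoodProbe G S v ω i} := by
    rintro ω ⟨s, hst, hs⟩
    obtain ⟨j, hjs, hj⟩ := A.exists_goodProbe_lt_of_succeedsBy hu hv hs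
    have hex : ∃ n, A.GoodProbe G S v ω n := ⟨j, hj⟩
    exact Set.mem_biUnion
      (Finset.mem_range.2 ((Nat.find_min' hex hj).trans_lt (hjs.trans hst)))
      ⟨Nat.find_spec hex, fun _ => Nat.find_min hex⟩
  calc _ ≤ ∑ i ∈ Finset.range t, perc (Sym2 V) p {ω | A.IsFirstGoodProbe G S v ω i} :=
        (measure_mono hsub).trans (measure_biUnion_finset_le _ _)
    _ ≤ ∑ _ ∈ Finset.range t, η :=
        Finset.sum_le_sum fun i _ => perc_isFirstGoodProbe_le hη hA hu i
    _ = t * η := by simp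

end Bound

theorem lower_bound_lemma_crossing_general {V : Type*} [Fintype V] [DecidableEq V]
    (G : SimpleGraph V) (p : ℝ)
    (S : Set V) (u v : V) (hv : v ∈ S) (hu : u ∉ S) (η : ℝ≥0∞)
    (hη : ∀ e ∈ G.edgeSet, (∃ x y : V, e = s(x, y) ∧ x ∈ S ∧ y ∉ S) →
      perc (Sym2 V) p {ω | ∃ x, x ∈ e ∧ OpenConnOn G ω S v x} ≤ η)
    (A : Alg V) (hA : A.IsLocal G u) (t : ℕ) :
    (perc (Sym2 V) p)[|{ω | OpenConn G ω u v}]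
        {ω | ∃ s < t, A.SucceedsBy G ω u v s}
      ≤ (t : ℝ≥0∞) * η / perc (Sym2 V) p {ω | OpenConn G ω u v} := by
  rw [cond_apply .of_discrete, ENNReal.div_eq_inv_mul]
  gcongr
  exact (measure_mono Set.inter_subset_right).trans
    (perc_exists_succeedsBy_lt_le (fun e he => hη e he.1 he.2) hA hu hv t)

/-- **Lower bound lemma (case `u ∈ S̄`).** If every edge `e` crossing the cut
`(S, S̄)` satisfies `Pr[(v ∼ e) ∈ S] ≤ η`, and `u ∉ S`, then any local routing
algorithm from `u` to `v` succeeds within fewer than `t` probes with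
conditional probability (given `u ∼ v`) at most `t·η / Pr[u ∼ v]`. -/
theorem lower_bound_lemma_crossing {V : Type*} [Fintype V] [DecidableEq V]
    (G : SimpleGraph V) (p : ℝ) (hp0 : 0 ≤ p) (hp1 : p ≤ 1)
    (S : Set V) (u v : V) (hv : v ∈ S) (hu : u ∉ S) (η : ℝ≥0∞)
    (hη : ∀ e ∈ G.edgeSet, (∃ x y : V, e = s(x, y) ∧ x ∈ S ∧ y ∉ S) →
      perc (Sym2 V) p {ω | ∃ x, x ∈ e ∧ OpenConnOn G ω S v x} ≤ η)
    (A : Alg V) (hA : A.IsLocal G u) (t : ℕ) :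
    (perc (Sym2 V) p)[|{ω | OpenConn G ω u v}]
        {ω | ∃ s < t, A.SucceedsBy G ω u v s}
      ≤ (t : ℝ≥0∞) * η / perc (Sym2 V) p {ω | OpenConn G ω u v} :=
  lower_bound_lemma_crossing_general G p S u v hv hu η hη A hA t
end

section
/- In the n-dimensional hypercube, let v be a vertex and l ≥ 1. For k ≥ 0, let A_k be the set of walks of length l + 2k from v to a fixed vertex x at Hamming distance l from v, such that the walk stays within the ball of radius l around v. Then |A_k| ≤ n^k · l^{2k} · l!. -/
open MeasureTheory ProbabilityTheory
open scoped ENNReal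

variable {V : Type*}

/-- The `n`-dimensional hypercube graph on `Fin n → Bool`: two vertices are
adjacent iff they differ in exactly one coordinate. -/
def cube (n : ℕ) : SimpleGraph (Fin n → Bool) where
  Adj x y := hammingDist x y = 1
  symm := ⟨fun x y (h : hammingDist x y = 1) => show hammingDist y x = 1 by rwa [hammingDist_comm]⟩
  loopless := ⟨fun x (h : hammingDist x x = 1) => by simp only [hammingDist_self] at h; exact Nat.zero_ne_one h⟩

instance (n : ℕ) : DecidableRel (cube n).Adj := fun x y => show Decidable (hammingDist x y = 1) from Nat.decEq _ _

/-- `Ak n l k v x`: walks of length `l + 2k` from `v` to `x` in the hypercube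
that stay within the ball of radius `l` around `v`. -/
def Ak (n l k : ℕ) (v x : Fin n → Bool) : Finset ((cube n).Walk v x) :=
  ((cube n).finsetWalkLength (l + 2 * k) v x).filter
    (fun w => ∀ z ∈ w.support, hammingDist v z ≤ l)

/-!
A walk from `v` is encoded by its sequence of flipped coordinates; the vertex reached after a
prefix `p` differs from `v` exactly in the coordinates occurring an odd number of times in `p`.
A code of length `l` reaching distance `l` must be an ordering of the `l` differing coordinates,
which gives `l!`. A code of length `l + 2k + 2` staying in the ball of radius `l` repeats a
coordinate among its first `l + 1` letters (otherwise its `(l + 1)`-st vertex is at distance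
`l + 1`). Deleting both occurrences gives a code of length `l + 2k` that still stays in the ball,
and the original code is recovered from the deleted letter and two positions below `l`: at most
`n · l · l` choices.
-/

theorem List.exists_eq_append_cons_append_cons_of_not_nodup {α : Type*} {s : List α}
    (h : ¬ s.Nodup) : ∃ a b d : List α, ∃ c : α, s = a ++ c :: (b ++ c :: d) := by
  obtain ⟨c, hc⟩ := not_forall_not.1 (mt List.nodup_iff_sublist.2 h)
  obtain ⟨r₁, r₂, rfl, h₁, h₂⟩ := List.cons_sublist_iff.1 hc
  obtain ⟨a, b, rfl⟩ := List.append_of_mem h₁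
  obtain ⟨e, d, rfl⟩ := List.append_of_mem (List.singleton_sublist.1 h₂)
  exact ⟨a, b ++ e, d, c, by simp⟩

def List.insertTwice {α : Type*} (c : α) (i j : ℕ) (s : List α) : List α :=
  s.take i ++ c :: ((s.drop i).take j ++ c :: (s.drop i).drop j)

theorem List.insertTwice_append {α : Type*} (a b d : List α) (c : α) :
    (a ++ (b ++ d)).insertTwice c a.length b.length = a ++ c :: (b ++ c :: d) := by
  simp [List.insertTwice]

namespace Hypercube

open Finset

variable {n : ℕ}

def flipAt (c : Fin n) (u : Fin n → Bool) : Fin n → Bool :=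
  Function.update u c (!u c)

def applyFlips (u : Fin n → Bool) (s : List (Fin n)) : Fin n → Bool :=
  s.foldl (fun w c => flipAt c w) u

theorem applyFlips_apply (u : Fin n → Bool) (s : List (Fin n)) (c : Fin n) :
    applyFlips u s c = (u c ^^ decide (Odd (s.count c))) := by
  induction s generalizing u with
  | nil => simp [applyFlips]
  | cons c' t ih =>
    change applyFlips (flipAt c' u) t c = _
    rw [ih]
    by_cases h : c' = c
    · subst h
      simp only [flipAt, Function.update_self, List.count_cons_self, Nat.odd_add_one, decide_not]
      cases u c' <;> simp
    · simp [flipAt, Function.update_of_ne (Ne.symm h), h]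

theorem ne_applyFlips_iff (u : Fin n → Bool) (s : List (Fin n)) (c : Fin n) :
    u c ≠ applyFlips u s c ↔ Odd (s.count c) := by
  rw [applyFlips_apply]
  cases u c <;> simp

theorem applyFlips_append (u : Fin n → Bool) (s t : List (Fin n)) :
    applyFlips u (s ++ t) = applyFlips (applyFlips u s) t :=
  List.foldl_append

theorem applyFlips_cons_append_cons (u : Fin n → Bool) (c : Fin n) (b d : List (Fin n)) :
    applyFlips u (c :: (b ++ c :: d)) = applyFlips u (b ++ d) := by
  funext j
  by_cases h : c = j
  · subst h; simp [applyFlips_apply, List.count_append, ← add_assoc, Nat.odd_add]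
  · simp [applyFlips_apply, List.count_append, h]

theorem hammingDist_applyFlips (u : Fin n → Bool) (s : List (Fin n)) :
    hammingDist u (applyFlips u s) = #{c | Odd (s.count c)} := by
  simp only [hammingDist, ne_applyFlips_iff]

theorem filter_ne_applyFlips_subset_toFinset (u : Fin n → Bool) (s : List (Fin n)) :
    ({c | u c ≠ applyFlips u s c} : Finset (Fin n)) ⊆ s.toFinset := by
  intro c hc
  rw [mem_filter, ne_applyFlips_iff] at hc
  exact List.mem_toFinset.2 (List.count_pos_iff.1 hc.2.pos)

theorem hammingDist_applyFlips_le_length (u : Fin n → Bool) (s : List (Fin n)) :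
    hammingDist u (applyFlips u s) ≤ s.length :=
  (card_le_card (filter_ne_applyFlips_subset_toFinset u s)).trans s.toFinset_card_le

theorem hammingDist_applyFlips_of_nodup (u : Fin n → Bool) {s : List (Fin n)}
    (hs : s.Nodup) :
    hammingDist u (applyFlips u s) = s.length := by
  rw [hammingDist_applyFlips, ← List.toFinset_card_of_nodup hs]
  congr 1
  ext c
  by_cases hc : c ∈ s
  · simp [List.count_eq_one_of_mem hs hc, hc]
  · simp [List.count_eq_zero_of_not_mem hc, hc]

theorem perm_toList_of_hammingDist_applyFlips_eq (u : Fin n → Bool) {s : List (Fin n)}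
    (hs : hammingDist u (applyFlips u s) = s.length) :
    s.Perm (univ.filter fun c => u c ≠ applyFlips u s c).toList := by
  have hsub := filter_ne_applyFlips_subset_toFinset u s
  have hD : ({c | u c ≠ applyFlips u s c} : Finset (Fin n)) = s.toFinset :=
    eq_of_subset_of_card_le hsub (s.toFinset_card_le.trans hs.ge)
  have hnodup : s.Nodup := by
    rw [← Multiset.coe_nodup, ← Multiset.toFinset_card_eq_card_iff_nodup, Multiset.coe_card,
      ← hs, hammingDist, hD]
    rfl
  exact List.perm_of_nodup_nodup_toFinset_eq hnodup (nodup_toList _) (by rw [toList_toFinset, hD])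

theorem exists_eq_flipAt_of_adj {u b : Fin n → Bool} (h : (cube n).Adj u b) :
    ∃ c, b = flipAt c u := by
  obtain ⟨c, hc⟩ := card_eq_one.1 (h : hammingDist u b = 1)
  have hdiff : ∀ j, u j ≠ b j ↔ j = c := fun j => by
    simpa using Finset.ext_iff.1 hc j
  refine ⟨c, Function.eq_update_iff.2 ⟨?_, fun j hj => ?_⟩⟩
  · have := (hdiff c).2 rfl
    revert this
    cases u c <;> cases b c <;> simp
  · by_contra hne
    exact hj ((hdiff j).1 (Ne.symm hne))

def trace (u : Fin n → Bool) : List (Fin n) → List (Fin n → Bool)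
  | [] => [u]
  | c :: t => u :: trace (flipAt c u) t

@[simp] theorem length_trace (u : Fin n → Bool) (s : List (Fin n)) :
    (trace u s).length = s.length + 1 := by
  induction s generalizing u with
  | nil => rfl
  | cons c t ih => simp [trace, ih]

theorem applyFlips_mem_trace_of_prefix {p s : List (Fin n)} (h : p <+: s) (u : Fin n → Bool) :
    applyFlips u p ∈ trace u s := by
  induction s generalizing p u with
  | nil => simp [List.prefix_nil.1 h, trace, applyFlips]
  | cons c t ih =>
    rcases List.prefix_cons_iff.1 h with rfl | ⟨p', rfl, hp'⟩
    · simp [trace, applyFlips]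
    · exact List.mem_cons_of_mem _ (ih hp' (flipAt c u))

theorem exists_support_eq_trace {u y : Fin n → Bool} (w : (cube n).Walk u y) :
    ∃ s, applyFlips u s = y ∧ w.support = trace u s := by
  induction w with
  | nil => exact ⟨[], rfl, rfl⟩
  | cons h p ih =>
    obtain ⟨c, rfl⟩ := exists_eq_flipAt_of_adj h
    obtain ⟨s, hs, hp⟩ := ih
    exact ⟨c :: s, hs, by rw [SimpleGraph.Walk.support_cons, hp, trace]⟩

def ballCodes (n l len : ℕ) (v x : Fin n → Bool) : Finset (List (Fin n)) :=
  ((univ : Finset (List.Vector (Fin n) len)).image List.Vector.toList).filter fun s =>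
    applyFlips v s = x ∧ ∀ p ∈ s.inits, hammingDist v (applyFlips v p) ≤ l

variable {l len : ℕ} {v x : Fin n → Bool}

theorem mem_ballCodes {s : List (Fin n)} :
    s ∈ ballCodes n l len v x ↔
      s.length = len ∧ applyFlips v s = x ∧
        ∀ p, p <+: s → hammingDist v (applyFlips v p) ≤ l := by
  simp only [ballCodes, mem_filter, mem_image, mem_univ, true_and, List.mem_inits]
  refine and_congr_left fun _ => ⟨?_, fun h => ⟨⟨s, h⟩, rfl⟩⟩
  rintro ⟨w, rfl⟩
  exact w.toList_length

theorem card_Ak_le_card_ballCodes (k : ℕ) :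
    #(Ak n l k v x) ≤ #(ballCodes n l (l + 2 * k) v x) := by
  calc #(Ak n l k v x)
      = #((Ak n l k v x).image SimpleGraph.Walk.support) :=
        (card_image_of_injective _ SimpleGraph.Walk.support_injective).symm
    _ ≤ #((ballCodes n l (l + 2 * k) v x).image (trace v)) := by
        refine card_le_card fun z hz => ?_
        obtain ⟨w, hw, rfl⟩ := mem_image.1 hz
        rw [Ak, mem_filter, SimpleGraph.mem_finsetWalkLength_iff] at hw
        obtain ⟨s, hsx, hws⟩ := exists_support_eq_trace w
        refine mem_image.2 ⟨s, mem_ballCodes.2 ⟨?_, hsx, fun p hp => ?_⟩, hws.symm⟩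
        · simpa [hws, hw.1] using w.length_support
        · exact hw.2 _ (hws ▸ applyFlips_mem_trace_of_prefix hp v)
    _ ≤ #(ballCodes n l (l + 2 * k) v x) := card_image_le

theorem card_ballCodes_le_factorial (hd : hammingDist v x = l) :
    #(ballCodes n l l v x) ≤ l.factorial := by
  have hsub :
      ballCodes n l l v x ⊆ (univ.filter fun c => v c ≠ x c).toList.permutations.toFinset := by
    intro s hs
    obtain ⟨hlen, rfl, -⟩ := mem_ballCodes.1 hs
    exact List.mem_toFinset.2 (List.mem_permutations.2
      (perm_toList_of_hammingDist_applyFlips_eq v (hd.trans hlen.symm)))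
  calc #(ballCodes n l l v x)
      ≤ (univ.filter fun c => v c ≠ x c).toList.permutations.length :=
        (card_le_card hsub).trans (List.toFinset_card_le _)
    _ = l.factorial := by rw [List.length_permutations, length_toList]; exact congrArg _ hd

theorem exists_split_of_mem_ballCodes {s : List (Fin n)} (hs : s ∈ ballCodes n l len v x)
    (hl : l < len) :
    ∃ a b d : List (Fin n), ∃ c, s = a ++ c :: (b ++ c :: d) ∧ a.length + b.length < l := by
  obtain ⟨hlen, -, hball⟩ := mem_ballCodes.1 hs
  have htake : (s.take (l + 1)).length = l + 1 := by rw [List.length_take]; omega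
  have hdup : ¬ (s.take (l + 1)).Nodup := fun hnd => by
    have := hball _ (List.take_prefix (l + 1) s)
    rw [hammingDist_applyFlips_of_nodup v hnd, htake] at this
    omega
  obtain ⟨a, b, d, c, habd⟩ := List.exists_eq_append_cons_append_cons_of_not_nodup hdup
  refine ⟨a, b, d ++ s.drop (l + 1), c, ?_, ?_⟩
  · conv_lhs => rw [← s.take_append_drop (l + 1), habd]
    simp
  · have := congrArg List.length habd
    simp only [List.length_take, List.length_append, List.length_cons] at this
    omega

theorem append_append_mem_ballCodes {a b d : List (Fin n)} {c : Fin n}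
    (hs : a ++ c :: (b ++ c :: d) ∈ ballCodes n l (len + 2) v x)
    (hab : a.length + b.length < l) :
    a ++ (b ++ d) ∈ ballCodes n l len v x := by
  obtain ⟨hlen, hx, hball⟩ := mem_ballCodes.1 hs
  have hcancel : ∀ t, applyFlips v (a ++ c :: (b ++ c :: t)) = applyFlips v (a ++ (b ++ t)) :=
    fun t => by rw [applyFlips_append, applyFlips_cons_append_cons, ← applyFlips_append]
  have hlen' : (a ++ (b ++ d)).length = len := by
    simp only [List.length_append, List.length_cons] at hlen ⊢
    omega
  refine mem_ballCodes.2 ⟨hlen', hcancel d ▸ hx, fun p hp => ?_⟩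
  rw [← List.append_assoc] at hp
  rcases List.prefix_or_prefix_of_prefix hp (List.prefix_append (a ++ b) d) with hp' | ⟨t, rfl⟩
  · calc hammingDist v (applyFlips v p) ≤ p.length := hammingDist_applyFlips_le_length v p
      _ ≤ l := by have := hp'.length_le; rw [List.length_append] at this; omega
  · rw [List.append_assoc, List.append_assoc, List.prefix_append_right_inj,
      List.prefix_append_right_inj] at hp
    rw [List.append_assoc, ← hcancel]
    refine hball _ ?_
    simpa using hp

theorem card_ballCodes_add_two_le (hl : l ≤ len + 1) :
    #(ballCodes n l (len + 2) v x) ≤ #(ballCodes n l len v x) * (n * (l * l)) :=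
  calc #(ballCodes n l (len + 2) v x)
      ≤ #(image₂ (fun s (q : Fin n × ℕ × ℕ) => s.insertTwice q.1 q.2.1 q.2.2)
          (ballCodes n l len v x) (univ ×ˢ range l ×ˢ range l)) := by
        refine card_le_card fun s hs => ?_
        obtain ⟨a, b, d, c, rfl, hab⟩ := exists_split_of_mem_ballCodes hs (Nat.lt_succ_of_le hl)
        refine mem_image₂.2 ⟨_, append_append_mem_ballCodes hs hab, (c, a.length, b.length), ?_,
          List.insertTwice_append ..⟩
        simp only [mem_product, mem_univ, mem_range, true_and]
        omega
    _ ≤ #(ballCodes n l len v x) * #(univ ×ˢ range l ×ˢ range l) := card_image₂_le ..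
    _ = #(ballCodes n l len v x) * (n * (l * l)) := by simp

theorem card_ballCodes_le (hd : hammingDist v x = l) (k : ℕ) :
    #(ballCodes n l (l + 2 * k) v x) ≤ n ^ k * l ^ (2 * k) * l.factorial := by
  induction k with
  | zero => simpa using card_ballCodes_le_factorial hd
  | succ k ih =>
    calc #(ballCodes n l (l + 2 * k + 2) v x)
        ≤ #(ballCodes n l (l + 2 * k) v x) * (n * (l * l)) :=
          card_ballCodes_add_two_le (by omega)
      _ ≤ n ^ k * l ^ (2 * k) * l.factorial * (n * (l * l)) := Nat.mul_le_mul_right _ ih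
      _ = n ^ (k + 1) * l ^ (2 * (k + 1)) * l.factorial := by ring

end Hypercube

theorem card_Ak_le_general (n l k : ℕ) (v x : Fin n → Bool)
    (hd : hammingDist v x = l) :
    (Ak n l k v x).card ≤ n ^ k * l ^ (2 * k) * l.factorial :=
  (Hypercube.card_Ak_le_card_ballCodes k).trans (Hypercube.card_ballCodes_le hd k)

/-- **Counting walks in the hypercube ball.** If `x` is at Hamming distance `l`
from `v`, the number of walks of length `l + 2k` from `v` to `x` staying in the
ball of radius `l` around `v` is at most `n^k · l^{2k} · l!`. -/
theorem card_Ak_le (n l k : ℕ) (hl : 1 ≤ l) (v x : Fin n → Bool)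
    (hd : hammingDist v x = l) :
    (Ak n l k v x).card ≤ n ^ k * l ^ (2 * k) * l.factorial :=
  card_Ak_le_general n l k v x hd
end

section
/- Consider a supercritical Galton–Watson binary branching tree where each of the two children of a node is present independently with probability q > 1/2. A depth-first search that explores the tree until reaching depth n visits, in expectation, O(n) edges; equivalently, the expected number of edges explored before finding a root-to-depth-n path, conditioned on the root's cluster reaching depth n, is at most C(q)·n for some constant C(q) < ∞. -/
/-!
Write `ρ = (1 - q) / q < 1`, the probability that a single branch (an edge together with the
subtree below it) of the infinite tree dies out. Disjoint subtrees are independent, so the search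
from a node fails iff both of its branches fail, and by induction this has probability at most
`ρ²`: a branch fails with probability at most `(1 - q) + q ρ² = ρ`. If `T` bounds the expected
number of probes below a child, the node costs at most `q T + 1` for the left branch plus, with
probability at most `ρ`, `q T + 1` for the right one; since `q (1 + ρ) = 1` this is `T + 1 + ρ`.
So the unconditional expectation is at most `(1 + ρ) n`, and conditioning on success, which has
probability at least `1 - ρ²`, costs a factor `(1 - ρ²)⁻¹`.
-/

open MeasureTheory ProbabilityTheory
open scoped ENNReal

variable {V : Type*}

/-- Nodes of the complete binary tree of depth `n`: a node at depth `k` is a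
boolean string of length `k`. -/
abbrev BTNode (n : ℕ) := Σ k : Fin (n + 1), (Fin (k : ℕ) → Bool)

/-- The root of the binary tree. -/
def btRoot (n : ℕ) : BTNode n := ⟨⟨0, Nat.succ_pos n⟩, Fin.elim0⟩

/-- The `b`-child of a node of depth `< n`. -/
def btChild {n : ℕ} (s : BTNode n) (h : (s.1 : ℕ) < n) (b : Bool) : BTNode n :=
  ⟨⟨(s.1 : ℕ) + 1, by omega⟩, Fin.snoc s.2 b⟩

/-- Depth-first search for an open path from a node `s` to depth `n`, in the
configuration `ω` (where `ω m = true` means the edge from the parent of `m` to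
`m` is present).  Returns the number of edges probed and whether depth `n` was
reached; `fuel` is the remaining depth budget (`n` minus the depth of `s`). -/
def dfs (n : ℕ) (ω : BTNode n → Bool) : ℕ → BTNode n → ℕ × Bool
  | 0, _ => (0, true)
  | fuel + 1, s =>
    if h : (s.1 : ℕ) < n then
      let resL := if ω (btChild s h false) then dfs n ω fuel (btChild s h false) else (0, false)
      if resL.2 then (resL.1 + 1, true)
      else
        let resR := if ω (btChild s h true) then dfs n ω fuel (btChild s h true) else (0, false)
        (resL.1 + resR.1 + 2, resR.2)
    else (0, true)

/-- The number of edges probed by a depth-first search from the root until an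
open path to depth `n` is found (or the whole open cluster is exhausted). -/
def dfsCount (n : ℕ) (ω : BTNode n → Bool) : ℕ := (dfs n ω n (btRoot n)).1

/-- The DFS found an open path from the root to depth `n`. -/
def dfsFound (n : ℕ) (ω : BTNode n → Bool) : Prop := (dfs n ω n (btRoot n)).2 = true

theorem DependsOn.comp_left {ι β γ : Type*} {α : ι → Type*} {f : (Π i, α i) → β} {s : Set ι}
    (hf : DependsOn f s) (g : β → γ) : DependsOn (fun x => g (f x)) s :=
  fun _ _ hxy => congrArg g (hf hxy)

section ProductMeasure

variable {ι : Type*} [Fintype ι] {Ω : ι → Type*} [∀ i, MeasurableSpace (Ω i)]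
  [∀ i, Countable (Ω i)] [∀ i, MeasurableSingletonClass (Ω i)]
  {μ : ∀ i, Measure (Ω i)} [∀ i, IsProbabilityMeasure (μ i)]

theorem lintegral_mul_of_dependsOn_disjoint {f g : (Π i, Ω i) → ℝ≥0∞} {s t : Set ι}
    (hf : DependsOn f s) (hg : DependsOn g t) (hst : Disjoint s t) :
    ∫⁻ x, f x * g x ∂Measure.pi μ =
      (∫⁻ x, f x ∂Measure.pi μ) * ∫⁻ x, g x ∂Measure.pi μ := by
  classical
  rw [← Set.coe_toFinset s] at hf hst
  rw [← Set.coe_toFinset t] at hg hst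
  obtain ⟨F, rfl⟩ := dependsOn_iff_exists_comp.1 hf
  obtain ⟨G, rfl⟩ := dependsOn_iff_exists_comp.1 hg
  have hindep := (iIndepFun_pi (μ := μ) (X := fun _ => id) fun _ => aemeasurable_id)
    |>.indepFun_finset s.toFinset t.toFinset (Finset.disjoint_coe.1 hst) measurable_pi_apply
  have hrestrict {u : Finset ι} : Measurable fun x : Π i, Ω i => fun i : u => x i :=
    measurable_pi_lambda _ fun _ => measurable_pi_apply _
  exact lintegral_mul_eq_lintegral_mul_lintegral_of_indepFun''
    ((measurable_of_countable F).comp hrestrict).aemeasurable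
    ((measurable_of_countable G).comp hrestrict).aemeasurable
    (hindep.comp (measurable_of_countable F) (measurable_of_countable G))

theorem lintegral_eval_mul_of_dependsOn {f : (Π i, Ω i) → ℝ≥0∞} {s : Set ι} {i : ι}
    (hf : DependsOn f s) (hi : i ∉ s) (h : Ω i → ℝ≥0∞) :
    ∫⁻ x, h (x i) * f x ∂Measure.pi μ =
      (∫⁻ ω, h ω ∂μ i) * ∫⁻ x, f x ∂Measure.pi μ := by
  rw [lintegral_mul_of_dependsOn_disjoint (s := {i}) (fun x y hxy => by rw [hxy i rfl]) hf
      (Set.disjoint_singleton_left.2 hi),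
    (measurePreserving_eval μ i).lintegral_comp (measurable_of_countable h)]

end ProductMeasure

theorem measure_true_add_measure_false (ν : Measure Bool) [IsProbabilityMeasure ν] :
    ν {true} + ν {false} = 1 := by
  rw [← measure_union (by simp) (measurableSet_singleton _), ← measure_univ (μ := ν)]
  congr
  ext b
  cases b <;> simp

theorem bern_apply_true {q : ℝ} (hq1 : q ≤ 1) : bern q {true} = ENNReal.ofReal q := by
  rw [bern, PMF.toMeasure_apply_singleton _ _ (measurableSet_singleton _)]
  change ((min q.toNNReal 1 : NNReal) : ℝ≥0∞) = _
  rw [min_eq_left (Real.toNNReal_le_one.2 hq1)]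
  rfl

theorem bern_apply_false {q : ℝ} (hq0 : 0 ≤ q) (hq1 : q ≤ 1) :
    bern q {false} = ENNReal.ofReal (1 - q) := by
  rw [bern, PMF.toMeasure_apply_singleton _ _ (measurableSet_singleton _)]
  change ((1 - min q.toNNReal 1 : NNReal) : ℝ≥0∞) = _
  rw [min_eq_left (Real.toNNReal_le_one.2 hq1), ENNReal.ofReal_sub _ hq0, ENNReal.ofReal_one]
  simp [ENNReal.ofReal]

section Tree

variable {n : ℕ}

def btSubtree (s : BTNode n) : Set (BTNode n) := {i | List.ofFn s.2 <+: List.ofFn i.2}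

theorem mem_btSubtree_self (s : BTNode n) : s ∈ btSubtree s := List.prefix_refl _

theorem ofFn_btChild (s : BTNode n) (h : (s.1 : ℕ) < n) (b : Bool) :
    List.ofFn (btChild s h b).2 = List.ofFn s.2 ++ [b] := by
  rw [btChild, List.ofFn_succ']
  simp

theorem btSubtree_btChild_subset (s : BTNode n) (h : (s.1 : ℕ) < n) (b : Bool) :
    btSubtree (btChild s h b) ⊆ btSubtree s \ {s} := by
  intro i hi
  rw [btSubtree, Set.mem_ofPred_eq, ofFn_btChild] at hi
  refine ⟨(List.prefix_append _ _).trans hi, ?_⟩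
  rintro rfl
  simpa using hi.length_le

theorem disjoint_btSubtree_btChild (s : BTNode n) (h : (s.1 : ℕ) < n) :
    Disjoint (btSubtree (btChild s h false)) (btSubtree (btChild s h true)) := by
  refine Set.disjoint_left.2 fun i hf ht => ?_
  simp only [btSubtree, Set.mem_ofPred_eq, ofFn_btChild] at hf ht
  simpa using List.prefix_of_prefix_length_le hf ht (by simp)

end Tree

def dfsBranch (b : Bool) (r : ℕ × Bool) : ℕ × Bool := if b then r else (0, false)

def dfsStep (l r : ℕ × Bool) : ℕ × Bool :=
  if l.2 then (l.1 + 1, true) else (l.1 + r.1 + 2, r.2)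

def failInd (r : ℕ × Bool) : ℝ≥0∞ := if r.2 then 0 else 1

theorem failInd_dfsStep (l r : ℕ × Bool) : failInd (dfsStep l r) = failInd l * failInd r := by
  unfold dfsStep failInd
  split_ifs <;> simp_all

theorem natCast_dfsStep_fst (l r : ℕ × Bool) :
    ((dfsStep l r).1 : ℝ≥0∞) = l.1 + 1 + failInd l * (r.1 + 1) := by
  unfold dfsStep failInd
  split_ifs <;> push_cast <;> ring

theorem lintegral_dfsBranch {ι : Type*} [Fintype ι] {ν : Measure Bool} [IsProbabilityMeasure ν]
    {D : (ι → Bool) → ℕ × Bool} {s : Set ι} {c : ι} (hD : DependsOn D s) (hc : c ∉ s)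
    (φ : ℕ × Bool → ℝ≥0∞) :
    ∫⁻ x, φ (dfsBranch (x c) (D x)) ∂Measure.pi (fun _ => ν) =
      ν {true} * ∫⁻ x, φ (D x) ∂Measure.pi (fun _ => ν) + ν {false} * φ (0, false) := by
  set t : Bool → ℝ≥0∞ := fun b => if b then 1 else 0
  set f : Bool → ℝ≥0∞ := fun b => if b then 0 else 1
  have hsplit : ∀ x : ι → Bool,
      φ (dfsBranch (x c) (D x)) = t (x c) * φ (D x) + f (x c) * φ (0, false) := fun x => by
    cases x c <;> simp [t, f, dfsBranch]
  rw [lintegral_congr hsplit, lintegral_add_left (measurable_of_countable _),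
    lintegral_eval_mul_of_dependsOn (μ := fun _ => ν) (hD.comp_left φ) hc t,
    lintegral_eval_mul_of_dependsOn (μ := fun _ => ν) (dependsOn_const (φ (0, false)))
      (Set.notMem_empty c) f]
  simp [t, f, lintegral_fintype]

section DFS

variable {n : ℕ}

theorem dfs_succ_of_lt (ω : BTNode n → Bool) (m : ℕ) (s : BTNode n) (h : (s.1 : ℕ) < n) :
    dfs n ω (m + 1) s =
      dfsStep (dfsBranch (ω (btChild s h false)) (dfs n ω m (btChild s h false)))
        (dfsBranch (ω (btChild s h true)) (dfs n ω m (btChild s h true))) := by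
  rw [dfs, dif_pos h]
  rfl

theorem dfs_succ_of_not_lt (ω : BTNode n → Bool) (m : ℕ) (s : BTNode n)
    (h : ¬(s.1 : ℕ) < n) : dfs n ω (m + 1) s = (0, true) := by
  rw [dfs, dif_neg h]

theorem dependsOn_dfs (m : ℕ) (s : BTNode n) :
    DependsOn (fun ω => dfs n ω m s) (btSubtree s \ {s}) := by
  induction m generalizing s with
  | zero => exact fun _ _ _ => rfl
  | succ m ih =>
    intro x y hxy
    by_cases h : (s.1 : ℕ) < n
    · have hbranch : ∀ b, dfsBranch (x (btChild s h b)) (dfs n x m (btChild s h b)) =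
          dfsBranch (y (btChild s h b)) (dfs n y m (btChild s h b)) := fun b => by
        rw [hxy _ (btSubtree_btChild_subset s h b (mem_btSubtree_self _))]
        exact congrArg _ (ih _ fun i hi => hxy i (btSubtree_btChild_subset s h b hi.1))
      simp only [dfs_succ_of_lt _ m s h, hbranch]
    · simp only [dfs_succ_of_not_lt _ m s h]

theorem dependsOn_dfsBranch (m : ℕ) (c : BTNode n) :
    DependsOn (fun ω => dfsBranch (ω c) (dfs n ω m c)) (btSubtree c) := fun x y hxy => by
  simp only [hxy c (mem_btSubtree_self c)]
  exact congrArg _ (dependsOn_dfs m c fun i hi => hxy i hi.1)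

variable {ν : Measure Bool} [IsProbabilityMeasure ν]

theorem lintegral_failInd_dfs_succ (m : ℕ) (s : BTNode n) (h : (s.1 : ℕ) < n) :
    ∫⁻ ω, failInd (dfs n ω (m + 1) s) ∂Measure.pi (fun _ => ν) =
      (ν {true} * ∫⁻ ω, failInd (dfs n ω m (btChild s h false)) ∂Measure.pi (fun _ => ν)
          + ν {false}) *
        (ν {true} * ∫⁻ ω, failInd (dfs n ω m (btChild s h true)) ∂Measure.pi (fun _ => ν)
          + ν {false}) := by
  simp_rw [dfs_succ_of_lt _ m s h, failInd_dfsStep]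
  rw [lintegral_mul_of_dependsOn_disjoint ((dependsOn_dfsBranch m _).comp_left failInd)
      ((dependsOn_dfsBranch m _).comp_left failInd) (disjoint_btSubtree_btChild s h),
    lintegral_dfsBranch (dependsOn_dfs m _) (fun hc => hc.2 rfl),
    lintegral_dfsBranch (dependsOn_dfs m _) (fun hc => hc.2 rfl)]
  simp [failInd]

theorem lintegral_dfs_fst_succ (m : ℕ) (s : BTNode n) (h : (s.1 : ℕ) < n) :
    ∫⁻ ω, ((dfs n ω (m + 1) s).1 : ℝ≥0∞) ∂Measure.pi (fun _ => ν) =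
      ν {true} * ∫⁻ ω, ((dfs n ω m (btChild s h false)).1 : ℝ≥0∞) ∂Measure.pi (fun _ => ν) + 1 +
        (ν {true} * ∫⁻ ω, failInd (dfs n ω m (btChild s h false)) ∂Measure.pi (fun _ => ν)
            + ν {false}) *
          (ν {true} * ∫⁻ ω, ((dfs n ω m (btChild s h true)).1 : ℝ≥0∞) ∂Measure.pi (fun _ => ν)
            + 1) := by
  simp_rw [dfs_succ_of_lt _ m s h, natCast_dfsStep_fst]
  rw [lintegral_add_left (measurable_of_countable _),
    lintegral_mul_of_dependsOn_disjoint ((dependsOn_dfsBranch m _).comp_left failInd)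
      ((dependsOn_dfsBranch m _).comp_left fun r => (r.1 : ℝ≥0∞) + 1)
      (disjoint_btSubtree_btChild s h),
    lintegral_add_right _ measurable_const, lintegral_add_right _ measurable_const,
    lintegral_dfsBranch (dependsOn_dfs m _) (fun hc => hc.2 rfl) failInd,
    lintegral_dfsBranch (dependsOn_dfs m _) (fun hc => hc.2 rfl) fun r => (r.1 : ℝ≥0∞),
    lintegral_dfsBranch (dependsOn_dfs m _) (fun hc => hc.2 rfl) fun r => (r.1 : ℝ≥0∞)]
  simp [failInd]

variable {ρ : ℝ≥0∞}

theorem measure_true_mul_add_measure_false_le (hρ : ν {true} * ρ = ν {false})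
    (htrue : ν {true} ≠ 0) {F : ℝ≥0∞} (hF : F ≤ ρ ^ 2) : ν {true} * F + ν {false} ≤ ρ := by
  refine (ENNReal.mul_le_mul_iff_right htrue (measure_ne_top _ _)).1 ?_
  calc ν {true} * (ν {true} * F + ν {false})
      ≤ ν {true} * (ν {true} * ρ ^ 2 + ν {false}) := by gcongr
    _ = ν {false} * (ν {true} + ν {false}) := by rw [← hρ]; ring
    _ = ν {true} * ρ := by rw [measure_true_add_measure_false, mul_one, hρ]

theorem lintegral_failInd_dfs_le (hρ : ν {true} * ρ = ν {false}) (htrue : ν {true} ≠ 0)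
    (m : ℕ) (s : BTNode n) :
    ∫⁻ ω, failInd (dfs n ω m s) ∂Measure.pi (fun _ => ν) ≤ ρ ^ 2 := by
  induction m generalizing s with
  | zero => simp [dfs, failInd]
  | succ m ih =>
    by_cases h : (s.1 : ℕ) < n
    · rw [lintegral_failInd_dfs_succ m s h, sq]
      exact mul_le_mul' (measure_true_mul_add_measure_false_le hρ htrue (ih _))
        (measure_true_mul_add_measure_false_le hρ htrue (ih _))
    · simp [dfs_succ_of_not_lt _ m s h, failInd]

theorem lintegral_dfs_fst_le (hρ : ν {true} * ρ = ν {false}) (htrue : ν {true} ≠ 0)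
    (m : ℕ) (s : BTNode n) :
    ∫⁻ ω, ((dfs n ω m s).1 : ℝ≥0∞) ∂Measure.pi (fun _ => ν) ≤ (1 + ρ) * m := by
  induction m generalizing s with
  | zero => simp [dfs]
  | succ m ih =>
    by_cases h : (s.1 : ℕ) < n
    · have hunit : ν {true} * (1 + ρ) = 1 := by
        rw [mul_add, mul_one, hρ, measure_true_add_measure_false]
      rw [lintegral_dfs_fst_succ m s h]
      calc _ ≤ ν {true} * ((1 + ρ) * m) + 1 + ρ * (ν {true} * ((1 + ρ) * m) + 1) := by
            gcongr
            · exact ih _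
            · exact measure_true_mul_add_measure_false_le hρ htrue
                (lintegral_failInd_dfs_le hρ htrue m _)
            · exact ih _
        _ = (1 + ρ) * (ν {true} * (1 + ρ) * m + 1) := by ring
        _ = (1 + ρ) * ↑(m + 1) := by rw [hunit]; push_cast; ring
    · simp [dfs_succ_of_not_lt _ m s h]

theorem lintegral_dfsCount_cond_le (hρ : ν {true} * ρ = ν {false}) (htrue : ν {true} ≠ 0) :
    ∫⁻ ω, (dfsCount n ω : ℝ≥0∞) ∂(Measure.pi (fun _ => ν))[|{ω | dfsFound n ω}] ≤
      (1 - ρ ^ 2)⁻¹ * ((1 + ρ) * n) := by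
  set μ : Measure (BTNode n → Bool) := Measure.pi fun _ => ν
  set S := {ω | dfsFound n ω}
  have hS : MeasurableSet S := (Set.to_countable _).measurableSet
  have hfail : μ Sᶜ ≤ ρ ^ 2 := by
    refine le_of_eq_of_le ?_ (lintegral_failInd_dfs_le hρ htrue n (btRoot n))
    rw [← lintegral_indicator_one hS.compl]
    congr 1
    ext ω
    by_cases hω : dfsFound n ω <;> simp_all [S, dfsFound, failInd]
  have hsucc : 1 - ρ ^ 2 ≤ μ S := by
    rw [tsub_le_iff_right, ← measure_univ (μ := μ), ← measure_add_measure_compl hS]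
    gcongr
  rw [ProbabilityTheory.cond, lintegral_smul_measure]
  exact mul_le_mul' (ENNReal.inv_le_inv.2 hsucc)
    ((setLIntegral_le_lintegral _ _).trans (lintegral_dfs_fst_le hρ htrue n (btRoot n)))

end DFS

/-- **DFS in a supercritical Galton–Watson binary tree is linear.** If each of
the two children of every node is present independently with probability
`q > 1/2`, then the expected number of edges explored by depth-first search
before finding a root-to-depth-`n` path, conditioned on the root's cluster
reaching depth `n`, is at most `C(q)·n`. -/
theorem dfs_supercritical_linear (q : ℝ) (hq : 1 / 2 < q) (hq1 : q ≤ 1) :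
    ∃ C : ℝ, 0 < C ∧ ∀ n : ℕ, 1 ≤ n →
      ∫⁻ ω, (dfsCount n ω : ℝ≥0∞)
          ∂((perc (BTNode n) q)[|{ω | dfsFound n ω}])
        ≤ ENNReal.ofReal (C * n) := by
  have hq0 : 0 < q := by linarith
  set ρ := (1 - q) / q
  have hρ0 : 0 ≤ ρ := div_nonneg (by linarith) hq0.le
  have hρ1 : ρ < 1 := (div_lt_one hq0).2 (by linarith)
  have hρsq : 0 < 1 - ρ ^ 2 := by nlinarith
  refine ⟨(1 - ρ ^ 2)⁻¹ * (1 + ρ), by positivity, fun n _ => ?_⟩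
  have hρ : bern q {true} * ENNReal.ofReal ρ = bern q {false} := by
    rw [bern_apply_true hq1, bern_apply_false hq0.le hq1, ← ENNReal.ofReal_mul hq0.le,
      mul_div_cancel₀ _ hq0.ne']
  have htrue : bern q {true} ≠ 0 := by
    rw [bern_apply_true hq1]
    exact (ENNReal.ofReal_pos.2 hq0).ne'
  refine (lintegral_dfsCount_cond_le hρ htrue).trans_eq ?_
  rw [← ENNReal.ofReal_pow hρ0, ← ENNReal.ofReal_one, ← ENNReal.ofReal_sub _ (by positivity),
    ← ENNReal.ofReal_add zero_le_one hρ0, ← ENNReal.ofReal_inv_of_pos hρsq,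
    ← ENNReal.ofReal_natCast, ← ENNReal.ofReal_mul (by positivity),
    ← ENNReal.ofReal_mul (by positivity), mul_assoc]
end

section
/- In the Erdős–Rényi random graph G(n, p) with p = c/n, c > 1, and vertices u, v with Pr[u ∼ v] ≥ a > 0, any local routing algorithm from u to v satisfies: for every k, Pr[the algorithm succeeds within k probes | u ∼ v] = O(√k / n). Consequently the expected number of probes conditioned on u ∼ v is Ω(n²). -/
open MeasureTheory ProbabilityTheory
open scoped ENNReal

variable {V : Type*}

/-!
Let `X_k` be the number of open edges found by the first `k` probes. Whatever the history, a
fresh probe is open with probability `p = c / n`, so `E[X_k] ≤ k p` and, by Markov's inequality,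
`X_k > √k` has probability `O(p √k)`. The algorithm can reach `v` for the first time only by a
fresh open probe of an edge `s(x, v)` with `x` already explored; while at most `m` open edges are
known there are at most `2m + 1` explored vertices, hence at most `2m + 1` such probes, each open
with probability `p`. So success within `k` probes has probability `O(p √k) = O(√k / n)`, and
conditioning on `u ∼ v` costs a factor `1 / a`. For `k` of order `n²` the algorithm therefore
fails within `k` probes with probability at least `1 / 2`, so its expected number of probes is
`Ω(n²)`.
-/

theorem exists_lt_not_and_succ {P : ℕ → Prop} {k : ℕ} (h0 : ¬P 0) (hk : P k) :
    ∃ t < k, ¬P t ∧ P (t + 1) := by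
  induction k with
  | zero => exact absurd hk h0
  | succ k ih =>
    by_cases h : P k
    · obtain ⟨t, htk, ht⟩ := ih h
      exact ⟨t, by omega, ht⟩
    · exact ⟨k, by omega, h, hk⟩

section Reached

variable {G : SimpleGraph V} {u x : V} {F F' : Set (Sym2 V)}

theorem reachedFrom_mono (h : F ⊆ F') : reachedFrom G u F ⊆ reachedFrom G u F' :=
  fun _ ⟨w, hw⟩ => ⟨w, fun e he => h (hw e he)⟩

theorem eq_or_exists_mem_of_mem_reachedFrom (hx : x ∈ reachedFrom G u F) :
    x = u ∨ ∃ e ∈ F, x ∈ e := by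
  obtain ⟨w, hw⟩ := hx
  rcases SimpleGraph.Walk.mem_support_iff_exists_mem_edges.1 w.reverse.start_mem_support with
    h | ⟨e, he, hxe⟩
  · exact .inl h
  · exact .inr ⟨e, hw e (by simpa using he), hxe⟩

theorem ncard_reachedFrom_le [Finite V] (G : SimpleGraph V) (u : V) (F : Set (Sym2 V)) :
    (reachedFrom G u F).ncard ≤ 2 * F.ncard + 1 := by
  classical
  set Fs := F.toFinite.toFinset
  have hsub : reachedFrom G u F ⊆ ↑(insert u (Fs.biUnion Sym2.toFinset)) := by
    intro x hx
    rcases eq_or_exists_mem_of_mem_reachedFrom hx with rfl | ⟨e, he, hxe⟩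
    · simp
    · simp only [Finset.coe_insert, Finset.coe_biUnion, Set.mem_insert_iff, Set.mem_iUnion]
      exact .inr ⟨e, by simpa [Fs] using he, by simpa using hxe⟩
  have hcard : ∀ e ∈ Fs, (Sym2.toFinset e).card ≤ 2 := fun e _ => by
    rw [Sym2.card_toFinset]; split_ifs <;> omega
  calc (reachedFrom G u F).ncard
      ≤ (insert u (Fs.biUnion Sym2.toFinset)).card :=
        (Set.ncard_le_ncard hsub).trans_eq (Set.ncard_coe_finset _)
    _ ≤ ∑ e ∈ Fs, (Sym2.toFinset e).card + 1 :=
        (Finset.card_insert_le _ _).trans (by gcongr; exact Finset.card_biUnion_le)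
    _ ≤ 2 * F.ncard + 1 := by
        have hF : F.ncard = Fs.card := Set.ncard_eq_toFinset_card F _
        have := Finset.sum_le_card_nsmul Fs _ 2 hcard
        simp only [smul_eq_mul] at this
        omega

end Reached

namespace Alg

variable {A : Alg V} {ω ω' : Sym2 V → Bool} {s t : ℕ} {e : Sym2 V} {u v : V}

theorem hist_succ (A : Alg V) (ω : Sym2 V → Bool) (t : ℕ) :
    A.hist ω (t + 1) = (A.next (A.hist ω t), ω (A.next (A.hist ω t))) :: A.hist ω t := rfl

theorem snd_eq_of_mem_hist {q : Sym2 V × Bool} (hq : q ∈ A.hist ω t) : q.2 = ω q.1 := by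
  induction t with
  | zero => simp [Alg.hist] at hq
  | succ t ih =>
    rcases List.mem_cons.1 hq with rfl | hq
    · rfl
    · exact ih hq

theorem hist_suffix (hst : s ≤ t) : A.hist ω s <:+ A.hist ω t := by
  induction t, hst using Nat.le_induction with
  | base => exact List.suffix_refl _
  | succ t _ ih => exact ih.trans (List.suffix_cons _ _)

theorem hist_eq_iff : A.hist ω' t = A.hist ω t ↔ ∀ q ∈ A.hist ω t, ω' q.1 = q.2 := by
  refine ⟨fun h q hq => (snd_eq_of_mem_hist (h ▸ hq)).symm, fun h => ?_⟩
  induction t with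
  | zero => rfl
  | succ t ih =>
    have ht := ih fun q hq => h q (List.mem_cons_of_mem _ hq)
    have hnext := h _ List.mem_cons_self
    simp only [hist_succ, ht] at hnext ⊢
    rw [hnext]

theorem preimage_hist_eq_pi (A : Alg V) (ω₀ : Sym2 V → Bool) (t : ℕ) :
    (A.hist · t) ⁻¹' {A.hist ω₀ t} =
      Set.univ.pi fun e => {b | ∀ q ∈ A.hist ω₀ t, q.1 = e → b = q.2} := by
  ext ω
  simp only [Set.mem_preimage, Set.mem_singleton_iff, hist_eq_iff, Set.mem_univ_pi,
    Set.mem_ofPred_eq]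
  exact ⟨fun h e q hq hqe => hqe ▸ h q hq, fun h q hq => h q.1 q hq rfl⟩

theorem mem_probedOpen_iff_s11 : e ∈ A.probedOpen ω t ↔ e ∈ (A.hist ω t).map Prod.fst ∧ ω e = true := by
  refine ⟨fun h => ⟨List.mem_map.2 ⟨_, h, rfl⟩, (snd_eq_of_mem_hist h).symm⟩, ?_⟩
  rintro ⟨he, hω⟩
  obtain ⟨q, hq, rfl⟩ := List.mem_map.1 he
  have : q = (q.1, true) := Prod.ext rfl (by rw [snd_eq_of_mem_hist hq, hω])
  exact this ▸ hq

theorem mem_probedOpen_succ :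
    e ∈ A.probedOpen ω (t + 1) ↔
      (e = A.next (A.hist ω t) ∧ ω e = true) ∨ e ∈ A.probedOpen ω t := by
  simp only [Alg.probedOpen, Set.mem_ofPred_eq, hist_succ, List.mem_cons, Prod.mk.injEq]
  grind

theorem probedOpen_zero : A.probedOpen ω 0 = ∅ := by
  simp [Alg.probedOpen, Alg.hist]

theorem probedOpen_mono (hst : s ≤ t) : A.probedOpen ω s ⊆ A.probedOpen ω t :=
  fun _ h => (hist_suffix hst).subset h

theorem next_mem_hist (hst : s < t) : A.next (A.hist ω s) ∈ (A.hist ω t).map Prod.fst :=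
  List.mem_map.2 ⟨_, (hist_suffix hst).subset List.mem_cons_self, rfl⟩

theorem injOn_next :
    Set.InjOn (fun t => A.next (A.hist ω t))
      {t | A.next (A.hist ω t) ∉ (A.hist ω t).map Prod.fst} := by
  intro s hs t ht (hst : A.next (A.hist ω s) = A.next (A.hist ω t))
  by_contra hne
  rcases Nat.lt_or_gt_of_ne hne with h | h
  · exact ht (hst ▸ next_mem_hist h)
  · exact hs (hst.symm ▸ next_mem_hist h)

theorem SucceedsBy.mono {G : SimpleGraph V} (hst : s ≤ t) (h : A.SucceedsBy G ω u v s) :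
    A.SucceedsBy G ω u v t :=
  reachedFrom_mono (probedOpen_mono hst) h

theorem not_succeedsBy_zero {G : SimpleGraph V} (huv : u ≠ v) : ¬A.SucceedsBy G ω u v 0 := by
  intro h
  rcases eq_or_exists_mem_of_mem_reachedFrom h with h | ⟨e, he, -⟩
  · exact huv h.symm
  · simp [probedOpen_zero] at he

theorem IsLocal.mem_reachedFrom (hloc : A.IsLocal ⊤ u) {x : V} (he : e ∈ A.probedOpen ω t)
    (hx : x ∈ e) : x ∈ reachedFrom ⊤ u (A.probedOpen ω t) := by
  induction t generalizing e x with
  | zero => simp [probedOpen_zero] at he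
  | succ t ih =>
    have hmono := reachedFrom_mono (G := ⊤) (u := u) (probedOpen_mono (A := A) (ω := ω)
      (Nat.le_succ t))
    rcases mem_probedOpen_succ.1 he with ⟨rfl, hopen⟩ | he
    · obtain ⟨y, ⟨w, hw⟩, hy⟩ := hloc ω t
      by_cases hxy : x = y
      · exact hmono (hxy ▸ ⟨w, hw⟩)
      have hedge : A.next (A.hist ω t) = s(y, x) := (Sym2.mem_and_mem_iff (Ne.symm hxy)).1 ⟨hy, hx⟩
      refine ⟨w.concat (Ne.symm hxy), fun e' he' => ?_⟩
      rw [SimpleGraph.Walk.edges_concat, List.concat_eq_append, List.mem_append,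
        List.mem_singleton] at he'
      rcases he' with he' | rfl
      · exact probedOpen_mono (Nat.le_succ t) (hw e' he')
      · exact mem_probedOpen_succ.2 (.inl ⟨hedge.symm, hedge ▸ hopen⟩)
    · exact hmono (ih he hx)

open Classical in
theorem ncard_probedOpen_succ_le [Finite V] (A : Alg V) (ω : Sym2 V → Bool) (t : ℕ) :
    (A.probedOpen ω (t + 1)).ncard ≤ (A.probedOpen ω t).ncard +
      if A.next (A.hist ω t) ∉ (A.hist ω t).map Prod.fst ∧ ω (A.next (A.hist ω t)) = true
      then 1 else 0 := by
  split_ifs with h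
  · refine (Set.ncard_le_ncard (t := insert (A.next (A.hist ω t)) _) fun e he => ?_).trans
      (Set.ncard_insert_le _ _)
    rcases mem_probedOpen_succ.1 he with ⟨rfl, -⟩ | he
    · exact Set.mem_insert _ _
    · exact Set.mem_insert_of_mem _ he
  · refine Set.ncard_le_ncard fun e he => ?_
    rcases mem_probedOpen_succ.1 he with ⟨rfl, hopen⟩ | he
    · exact mem_probedOpen_iff_s11.2 ⟨not_not.1 fun hf => h ⟨hf, hopen⟩, hopen⟩
    · exact he

def IsHittingProbe (A : Alg V) (u v : V) (m : ℕ) (h : List (Sym2 V × Bool)) : Prop :=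
  v ∈ A.next h ∧ v ∉ reachedFrom ⊤ u {e | (e, true) ∈ h} ∧ A.next h ∉ h.map Prod.fst ∧
    {e | (e, true) ∈ h}.ncard ≤ m

theorem exists_isHittingProbe_of_succeedsBy [Finite V] (hloc : A.IsLocal ⊤ u) (huv : u ≠ v)
    {k m : ℕ} (hs : A.SucceedsBy ⊤ ω u v k) (hm : (A.probedOpen ω k).ncard ≤ m) :
    ∃ t < k, A.IsHittingProbe u v m (A.hist ω t) ∧ ω (A.next (A.hist ω t)) = true := by
  obtain ⟨t, htk, hvt, hvt'⟩ := exists_lt_not_and_succ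
    (P := fun t => v ∈ reachedFrom ⊤ u (A.probedOpen ω t)) (not_succeedsBy_zero huv) hs
  obtain ⟨e, he, hve⟩ := (eq_or_exists_mem_of_mem_reachedFrom hvt').resolve_left huv.symm
  have hnew : e ∉ A.probedOpen ω t := fun h => hvt (hloc.mem_reachedFrom h hve)
  obtain ⟨rfl, hopen⟩ := (mem_probedOpen_succ.1 he).resolve_right hnew
  refine ⟨t, htk, ⟨hve, hvt, fun h => hnew (mem_probedOpen_iff_s11.2 ⟨h, hopen⟩), ?_⟩, hopen⟩
  exact (Set.ncard_le_ncard (probedOpen_mono htk.le)).trans hm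

open Classical in
/-- Hitting probes are distinct edges `s(x, v)` with `x` explored, so there are at most as many
as explored vertices. -/
theorem card_filter_isHittingProbe_le [Finite V] (hloc : A.IsLocal ⊤ u) (ω : Sym2 V → Bool)
    (k m : ℕ) :
    ((Finset.range k).filter fun t => A.IsHittingProbe u v m (A.hist ω t)).card ≤ 2 * m + 1 := by
  set T := (Finset.range k).filter fun t => A.IsHittingProbe u v m (A.hist ω t)
  rcases T.eq_empty_or_nonempty with hT | hT
  · simp [hT]
  obtain ⟨t₀, ht₀, hmax⟩ := T.exists_max_image id hT
  have hit : ∀ t ∈ T, A.IsHittingProbe u v m (A.hist ω t) := fun t ht => (Finset.mem_filter.1 ht).2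
  set R := reachedFrom ⊤ u (A.probedOpen ω t₀)
  have hmaps : ∀ t ∈ T, A.next (A.hist ω t) ∈ (fun x => s(x, v)) '' R := by
    intro t ht
    obtain ⟨x, hxR, hx⟩ := hloc ω t
    have hxv : x ≠ v := fun h => (hit t ht).2.1 (h ▸ hxR)
    exact ⟨x, reachedFrom_mono (probedOpen_mono (hmax t ht)) hxR,
      ((Sym2.mem_and_mem_iff hxv).1 ⟨hx, (hit t ht).1⟩).symm⟩
  have hinj : Set.InjOn (fun t => A.next (A.hist ω t)) T :=
    injOn_next.mono fun t ht => (hit t ht).2.2.1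
  calc T.card = ((fun t => A.next (A.hist ω t)) '' T).ncard := by
        rw [hinj.ncard_image, Set.ncard_coe_finset]
    _ ≤ ((fun x => s(x, v)) '' R).ncard := Set.ncard_le_ncard (Set.image_subset_iff.2 hmaps)
    _ ≤ R.ncard := Set.ncard_image_le (Set.toFinite R)
    _ ≤ 2 * m + 1 := (ncard_reachedFrom_le _ _ _).trans (by
      have : (A.probedOpen ω t₀).ncard ≤ m := (hit t₀ ht₀).2.2.2
      omega)

end Alg

theorem bern_true_le (p : ℝ) : bern p {true} ≤ ENNReal.ofReal p := by
  rw [bern, PMF.toMeasure_apply_singleton _ _ (measurableSet_singleton _)]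
  change ((min p.toNNReal 1 : NNReal) : ℝ≥0∞) ≤ ENNReal.ofReal p
  exact ENNReal.coe_le_coe.2 (min_le_left _ _)

namespace MeasureTheory

theorem measure_eq_sum_measure_fiber {α β : Type*} [MeasurableSpace α] [DiscreteMeasurableSpace α]
    (μ : Measure α) (f : α → β) (s : Finset β) (hs : ∀ x, f x ∈ s) (S : Set α) :
    μ S = ∑ b ∈ s, μ (f ⁻¹' {b} ∩ S) := by
  have := sum_measure_preimage_singleton (μ := μ.restrict S) s (f := f) fun _ _ => .of_discrete
  simp only [Measure.restrict_apply .of_discrete] at this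
  rw [this, Set.preimage_eq_univ_iff.2 fun _ ⟨x, hx⟩ => hx ▸ hs x, Set.univ_inter]

theorem measure_le_mul_of_forall_fiber {α β : Type*} [MeasurableSpace α]
    [DiscreteMeasurableSpace α] (μ : Measure α) (f : α → β) (s : Finset β) (hs : ∀ x, f x ∈ s)
    {S T : Set α} {c : ℝ≥0∞} (h : ∀ b ∈ s, μ (f ⁻¹' {b} ∩ S) ≤ c * μ (f ⁻¹' {b} ∩ T)) :
    μ S ≤ c * μ T := by
  rw [measure_eq_sum_measure_fiber μ f s hs S, measure_eq_sum_measure_fiber μ f s hs T,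
    Finset.mul_sum]
  exact Finset.sum_le_sum h

open Classical in
theorem sum_measure_le_of_forall_card_filter_le {α ι : Type*} [MeasurableSpace α]
    [DiscreteMeasurableSpace α] (μ : Measure α) (s : Finset ι) (S : ι → Set α) (N : ℕ)
    (h : ∀ x, (s.filter fun i => x ∈ S i).card ≤ N) :
    ∑ i ∈ s, μ (S i) ≤ N * μ Set.univ := by
  have hcount : ∀ x, ∑ i ∈ s, (S i).indicator 1 x = ((s.filter fun i => x ∈ S i).card : ℝ≥0∞) := by
    intro x
    simp only [Finset.card_filter, Nat.cast_sum, Set.indicator_apply, Pi.one_apply]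
    exact Finset.sum_congr rfl fun i _ => by split_ifs <;> simp
  calc ∑ i ∈ s, μ (S i) = ∫⁻ x, ∑ i ∈ s, (S i).indicator 1 x ∂μ := by
        rw [lintegral_finsetSum _ fun _ _ => .of_discrete]
        exact Finset.sum_congr rfl fun i _ => (lintegral_indicator_one .of_discrete).symm
    _ ≤ ∫⁻ _, (N : ℝ≥0∞) ∂μ := lintegral_mono fun x => by rw [hcount]; exact Nat.cast_le.2 (h x)
    _ = N * μ Set.univ := lintegral_const _

/-- Take `k = ⌊1 / (4 C²)⌋`, where the tail bound is at most `1 / 2`; when `k` is small, use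
`T ≥ 1` instead. -/
theorem le_lintegral_of_measure_lt_le_mul_sqrt {Ω : Type*} [MeasurableSpace Ω] {ν : Measure Ω}
    [IsProbabilityMeasure ν] {T : Ω → ℕ} (hT : Measurable T) (h1 : ∀ᵐ ω ∂ν, 1 ≤ T ω) {C : ℝ}
    (hC : 0 < C) (h : ∀ k : ℕ, ν {ω | T ω < k} ≤ ENNReal.ofReal (C * √k)) :
    ENNReal.ofReal (1 / (16 * C ^ 2)) ≤ ∫⁻ ω, (T ω : ℝ≥0∞) ∂ν := by
  set x : ℝ := 1 / (4 * C ^ 2)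
  set k := ⌊x⌋₊
  have hone : 1 ≤ ∫⁻ ω, (T ω : ℝ≥0∞) ∂ν := by
    calc (1 : ℝ≥0∞) = ∫⁻ _, 1 ∂ν := by simp
      _ ≤ _ := lintegral_mono_ae (h1.mono fun ω hω => by exact_mod_cast hω)
  have hsmall : ν {ω | T ω < k} ≤ 2⁻¹ := by
    have hsqrt : √x = 1 / (2 * C) := by
      rw [show x = (1 / (2 * C)) ^ 2 by simp only [x]; field_simp; ring,
        Real.sqrt_sq (by positivity)]
    have : C * √k ≤ 1 / 2 := by
      calc C * √k ≤ C * √x := by gcongr; exact Nat.floor_le (by positivity)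
        _ = 1 / 2 := by rw [hsqrt]; field_simp
    refine (h k).trans ((ENNReal.ofReal_le_ofReal this).trans_eq ?_)
    rw [one_div, ENNReal.ofReal_inv_of_pos two_pos, ENNReal.ofReal_ofNat]
  have htail : 2⁻¹ ≤ ν {ω | (k : ℝ≥0∞) ≤ T ω} := by
    have hcompl : {ω | (k : ℝ≥0∞) ≤ T ω} = {ω | T ω < k}ᶜ := by ext; simp
    rw [hcompl, prob_compl_eq_one_sub (s := {ω | T ω < k}) (hT measurableSet_Iio),
      ← ENNReal.one_sub_inv_two]
    exact tsub_le_tsub_left hsmall 1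
  have hmarkov : (k : ℝ≥0∞) * 2⁻¹ ≤ ∫⁻ ω, (T ω : ℝ≥0∞) ∂ν :=
    (mul_le_mul_right htail _).trans (mul_meas_ge_le_lintegral₀
      ((Measurable.of_discrete (f := fun n : ℕ => (n : ℝ≥0∞))).comp hT).aemeasurable (k : ℝ≥0∞))
  by_cases hx : x < 2
  · refine le_trans ?_ hone
    rw [ENNReal.ofReal_le_one, show 1 / (16 * C ^ 2) = x / 4 by simp only [x]; field_simp; ring]
    linarith
  · refine le_trans ?_ hmarkov
    have hk : x / 2 ≤ k := by linarith [Nat.sub_one_lt_floor x]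
    rw [← ENNReal.ofReal_natCast, ← ENNReal.ofReal_ofNat 2, ← ENNReal.ofReal_inv_of_pos two_pos,
      ← ENNReal.ofReal_mul (Nat.cast_nonneg _)]
    exact ENNReal.ofReal_le_ofReal (by
      rw [show 1 / (16 * C ^ 2) = x / 4 by simp only [x]; field_simp; ring]
      linarith)

end MeasureTheory

theorem ProbabilityTheory.cond_apply_le_inv_mul {Ω : Type*} [MeasurableSpace Ω] (μ : Measure Ω)
    {s : Set Ω} (hs : MeasurableSet s) (t : Set Ω) : μ[t|s] ≤ (μ s)⁻¹ * μ t := by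
  rw [cond_apply hs]
  gcongr
  exact Set.inter_subset_right

theorem perc_pi_inter_eq_true {E : Type*} [Fintype E] [DecidableEq E] (p : ℝ) {s : E → Set Bool}
    {e₀ : E} (he₀ : s e₀ = Set.univ) :
    perc E p (Set.univ.pi s ∩ {ω | ω e₀ = true}) = bern p {true} * perc E p (Set.univ.pi s) := by
  have hset : Set.univ.pi s ∩ {ω | ω e₀ = true} = Set.univ.pi (Function.update s e₀ {true}) := by
    ext ω
    simp only [Set.mem_inter_iff, Set.mem_univ_pi, Set.mem_ofPred_eq]
    refine ⟨fun ⟨h, h₀⟩ e => ?_, fun h => ⟨fun e => ?_, by simpa using h e₀⟩⟩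
    · rcases eq_or_ne e e₀ with rfl | he
      · simpa using h₀
      · simpa [he] using h e
    · rcases eq_or_ne e e₀ with rfl | he
      · simp [he₀]
      · simpa [he] using h e
  simp only [hset, perc, Measure.pi_pi]
  rw [← Finset.mul_prod_erase _ _ (Finset.mem_univ e₀),
    ← Finset.mul_prod_erase _ (fun e => bern p (s e)) (Finset.mem_univ e₀),
    Function.update_self, he₀, measure_univ, one_mul]
  congr 1
  refine Finset.prod_congr rfl fun e he => ?_
  rw [Function.update_of_ne (Finset.ne_of_mem_erase he)]

namespace Alg

variable [Fintype V] [DecidableEq V] {A : Alg V} {u v : V}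

/-- The event `A.hist ω t = h` is a cylinder on the edges probed in `h` (`preimage_hist_eq_pi`),
on which the fresh edge `A.next h` is an unconstrained coordinate. -/
theorem perc_fresh_open_le (A : Alg V) (p : ℝ) (P : List (Sym2 V × Bool) → Prop) (t : ℕ) :
    perc (Sym2 V) p {ω | P (A.hist ω t) ∧ A.next (A.hist ω t) ∉ (A.hist ω t).map Prod.fst ∧
        ω (A.next (A.hist ω t)) = true}
      ≤ bern p {true} * perc (Sym2 V) p {ω | P (A.hist ω t)} := by
  classical
  refine measure_le_mul_of_forall_fiber _ (A.hist · t) (Finset.univ.image (A.hist · t))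
    (fun ω => Finset.mem_image_of_mem _ (Finset.mem_univ ω)) fun h hh => ?_
  obtain ⟨ω₀, -, rfl⟩ := Finset.mem_image.1 hh
  by_cases hP : P (A.hist ω₀ t) ∧ A.next (A.hist ω₀ t) ∉ (A.hist ω₀ t).map Prod.fst
  · have hS : (A.hist · t) ⁻¹' {A.hist ω₀ t} ∩ {ω | P (A.hist ω t) ∧
        A.next (A.hist ω t) ∉ (A.hist ω t).map Prod.fst ∧ ω (A.next (A.hist ω t)) = true} =
        (A.hist · t) ⁻¹' {A.hist ω₀ t} ∩ {ω | ω (A.next (A.hist ω₀ t)) = true} := by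
      ext ω
      simp only [Set.mem_inter_iff, Set.mem_preimage, Set.mem_singleton_iff, Set.mem_ofPred_eq]
      exact ⟨fun ⟨h, _, _, ho⟩ => ⟨h, h ▸ ho⟩, fun ⟨h, ho⟩ => ⟨h, h ▸ hP.1, h ▸ hP.2, h ▸ ho⟩⟩
    have hT : (A.hist · t) ⁻¹' {A.hist ω₀ t} ∩ {ω | P (A.hist ω t)} =
        (A.hist · t) ⁻¹' {A.hist ω₀ t} :=
      Set.inter_eq_left.2 fun ω (h : A.hist ω t = A.hist ω₀ t) => by
        simpa only [Set.mem_ofPred_eq, h] using hP.1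
    have hfresh : {b : Bool | ∀ q ∈ A.hist ω₀ t, q.1 = A.next (A.hist ω₀ t) → b = q.2} =
        Set.univ :=
      Set.eq_univ_of_forall fun _ q hq hqe => absurd (hqe ▸ List.mem_map_of_mem hq) hP.2
    rw [hS, hT, preimage_hist_eq_pi]
    exact (perc_pi_inter_eq_true (s := fun e => {b | ∀ q ∈ A.hist ω₀ t, q.1 = e → b = q.2})
      p hfresh).le
  · have hS : (A.hist · t) ⁻¹' {A.hist ω₀ t} ∩ {ω | P (A.hist ω t) ∧
        A.next (A.hist ω t) ∉ (A.hist ω t).map Prod.fst ∧ ω (A.next (A.hist ω t)) = true} = ∅ := by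
      ext ω
      simp only [Set.mem_inter_iff, Set.mem_preimage, Set.mem_singleton_iff, Set.mem_ofPred_eq,
        Set.mem_empty_iff_false, iff_false]
      rintro ⟨h, hP', hf, -⟩
      exact hP ⟨h ▸ hP', h ▸ hf⟩
    rw [hS, measure_empty]
    exact zero_le

theorem lintegral_ncard_probedOpen_le (A : Alg V) (p : ℝ) (k : ℕ) :
    ∫⁻ ω, ((A.probedOpen ω k).ncard : ℝ≥0∞) ∂perc (Sym2 V) p ≤ k * bern p {true} := by
  induction k with
  | zero => simp [probedOpen_zero]
  | succ k ih =>
    set B := {ω : Sym2 V → Bool | True ∧ A.next (A.hist ω k) ∉ (A.hist ω k).map Prod.fst ∧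
      ω (A.next (A.hist ω k)) = true}
    have hstep : ∀ ω, ((A.probedOpen ω (k + 1)).ncard : ℝ≥0∞) ≤
        (A.probedOpen ω k).ncard + B.indicator 1 ω := fun ω => by
      have := ncard_probedOpen_succ_le A ω k
      simp only [B, Set.indicator_apply, Set.mem_ofPred_eq, true_and, Pi.one_apply]
      split_ifs at this ⊢ <;> exact_mod_cast this
    calc ∫⁻ ω, ((A.probedOpen ω (k + 1)).ncard : ℝ≥0∞) ∂perc (Sym2 V) p
        ≤ ∫⁻ ω, ((A.probedOpen ω k).ncard + B.indicator 1 ω : ℝ≥0∞) ∂perc (Sym2 V) p :=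
          lintegral_mono hstep
      _ = ∫⁻ ω, ((A.probedOpen ω k).ncard : ℝ≥0∞) ∂perc (Sym2 V) p + perc (Sym2 V) p B := by
          rw [lintegral_add_left .of_discrete, lintegral_indicator_one .of_discrete]
      _ ≤ k * bern p {true} + bern p {true} * 1 := by
          gcongr
          exact (perc_fresh_open_le A p (fun _ => True) k).trans_eq (by simp)
      _ = (k + 1 : ℕ) * bern p {true} := by push_cast; ring

theorem perc_succeedsBy_and_ncard_le (p : ℝ) (hloc : A.IsLocal ⊤ u) (huv : u ≠ v) (k m : ℕ) :
    perc (Sym2 V) p {ω | A.SucceedsBy ⊤ ω u v k ∧ (A.probedOpen ω k).ncard ≤ m}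
      ≤ bern p {true} * (2 * m + 1 : ℕ) := by
  set H := fun t => {ω : Sym2 V → Bool | A.IsHittingProbe u v m (A.hist ω t)}
  have hsub : {ω | A.SucceedsBy ⊤ ω u v k ∧ (A.probedOpen ω k).ncard ≤ m} ⊆
      ⋃ t ∈ Finset.range k, {ω | A.IsHittingProbe u v m (A.hist ω t) ∧
        A.next (A.hist ω t) ∉ (A.hist ω t).map Prod.fst ∧ ω (A.next (A.hist ω t)) = true} := by
    rintro ω ⟨hs, hm⟩
    obtain ⟨t, htk, hhit, hopen⟩ := exists_isHittingProbe_of_succeedsBy hloc huv hs hm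
    exact Set.mem_biUnion (Finset.mem_range.2 htk) ⟨hhit, hhit.2.2.1, hopen⟩
  calc _ ≤ ∑ t ∈ Finset.range k, perc (Sym2 V) p {ω | A.IsHittingProbe u v m (A.hist ω t) ∧
          A.next (A.hist ω t) ∉ (A.hist ω t).map Prod.fst ∧ ω (A.next (A.hist ω t)) = true} :=
        (measure_mono hsub).trans (measure_biUnion_finset_le _ _)
    _ ≤ ∑ t ∈ Finset.range k, bern p {true} * perc (Sym2 V) p (H t) :=
        Finset.sum_le_sum fun t _ => perc_fresh_open_le A p _ t
    _ ≤ bern p {true} * (2 * m + 1 : ℕ) := by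
        rw [← Finset.mul_sum]
        gcongr
        simpa using sum_measure_le_of_forall_card_filter_le (perc (Sym2 V) p) _ H _
          fun ω => card_filter_isHittingProbe_le hloc ω k m

/-- Split at `m = ⌊√k⌋` open edges: Markov's inequality above, hitting probes below. -/
theorem perc_succeedsBy_le (p : ℝ) (hloc : A.IsLocal ⊤ u) (huv : u ≠ v) (k : ℕ) :
    perc (Sym2 V) p {ω | A.SucceedsBy ⊤ ω u v k}
      ≤ bern p {true} * (3 * Nat.sqrt k + 2 : ℕ) := by
  set m := Nat.sqrt k
  set X := fun ω => ((A.probedOpen ω k).ncard : ℝ≥0∞)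
  have hsplit : {ω | A.SucceedsBy ⊤ ω u v k} ⊆
      {ω | A.SucceedsBy ⊤ ω u v k ∧ (A.probedOpen ω k).ncard ≤ m} ∪ {ω | (m + 1 : ℕ) ≤ X ω} := by
    intro ω hs
    by_cases hm : (A.probedOpen ω k).ncard ≤ m
    · exact .inl ⟨hs, hm⟩
    · exact .inr (by simp only [X, Set.mem_ofPred_eq]; exact_mod_cast (by omega))
  have hmarkov : perc (Sym2 V) p {ω | (m + 1 : ℕ) ≤ X ω} ≤ (m + 1 : ℕ) * bern p {true} := by
    have hk : (k : ℝ≥0∞) ≤ (m + 1 : ℕ) * (m + 1 : ℕ) := by exact_mod_cast (Nat.lt_succ_sqrt k).le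
    have := (mul_meas_ge_le_lintegral₀ (f := X) Measurable.of_discrete.aemeasurable
      ((m + 1 : ℕ) : ℝ≥0∞)).trans
      ((lintegral_ncard_probedOpen_le A p k).trans (mul_le_mul_left hk _))
    rw [mul_assoc] at this
    exact (ENNReal.mul_le_mul_iff_right (by simp) (by simp)).1 this
  calc _ ≤ _ := measure_mono hsplit
    _ ≤ _ := measure_union_le _ _
    _ ≤ bern p {true} * (2 * m + 1 : ℕ) + (m + 1 : ℕ) * bern p {true} :=
        add_le_add (perc_succeedsBy_and_ncard_le p hloc huv k m) hmarkov
    _ = bern p {true} * (3 * m + 2 : ℕ) := by push_cast; ring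

theorem perc_exists_succeedsBy_lt_le (p : ℝ) (hloc : A.IsLocal ⊤ u) (huv : u ≠ v) (k : ℕ) :
    perc (Sym2 V) p {ω | ∃ s < k, A.SucceedsBy ⊤ ω u v s}
      ≤ bern p {true} * ENNReal.ofReal (5 * √k) := by
  rcases k.eq_zero_or_pos with rfl | hk
  · simp
  have hsqrt : ((3 * Nat.sqrt k + 2 : ℕ) : ℝ) ≤ 5 * √k := by
    have h1 : (1 : ℝ) ≤ √k := Real.one_le_sqrt.2 (by exact_mod_cast hk)
    push_cast
    linarith [Real.nat_sqrt_le_real_sqrt (a := k)]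
  calc _ ≤ perc (Sym2 V) p {ω | A.SucceedsBy ⊤ ω u v k} :=
        measure_mono fun ω hω => by
          obtain ⟨s, hs, h⟩ := hω
          exact h.mono hs.le
    _ ≤ bern p {true} * (3 * Nat.sqrt k + 2 : ℕ) := perc_succeedsBy_le p hloc huv k
    _ ≤ bern p {true} * ENNReal.ofReal (5 * √k) := by
        rw [← ENNReal.ofReal_natCast]
        gcongr

theorem cond_exists_succeedsBy_lt_le {p a : ℝ} (hp : 0 ≤ p) (ha : 0 < a)
    (hloc : A.IsLocal ⊤ u) (huv : u ≠ v) {s : Set (Sym2 V → Bool)}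
    (hs : ENNReal.ofReal a ≤ perc (Sym2 V) p s) (k : ℕ) :
    (perc (Sym2 V) p)[|s] {ω | ∃ t < k, A.SucceedsBy ⊤ ω u v t}
      ≤ ENNReal.ofReal (5 * p / a * √k) := calc
  _ ≤ (perc (Sym2 V) p s)⁻¹ * perc (Sym2 V) p {ω | ∃ t < k, A.SucceedsBy ⊤ ω u v t} :=
      cond_apply_le_inv_mul _ .of_discrete _
  _ ≤ (ENNReal.ofReal a)⁻¹ * (ENNReal.ofReal p * ENNReal.ofReal (5 * √k)) := by
      gcongr
      exact (perc_exists_succeedsBy_lt_le p hloc huv k).trans (by gcongr; exact bern_true_le p)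
  _ = ENNReal.ofReal (5 * p / a * √k) := by
      rw [← ENNReal.ofReal_inv_of_pos ha, ← ENNReal.ofReal_mul hp,
        ← ENNReal.ofReal_mul (by positivity)]
      congr 1
      field_simp

end Alg

/-- **Local routing in `G(n, c/n)` needs `Ω(n²)` probes.** For `p = c/n`,
`c > 1`, and vertices `u ≠ v` with `Pr[u ∼ v] ≥ a > 0`, any correct local
routing algorithm succeeds within `k` probes with conditional probability at
most `K·√k/n`, and consequently its expected number of probes (conditioned on
`u ∼ v`) is at least `K'·n²`. -/
theorem gnp_local_routing_lower (c : ℝ) (hc : 1 < c) (a : ℝ) (ha : 0 < a) :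
    ∃ K : ℝ, 0 < K ∧ ∃ K' : ℝ, 0 < K' ∧
      ∀ n : ℕ, 0 < n → ∀ u v : Fin n, u ≠ v → ∀ A : Alg (Fin n),
        A.IsLocal (⊤ : SimpleGraph (Fin n)) u →
        (∀ ω, OpenConn (⊤ : SimpleGraph (Fin n)) ω u v →
          ∃ t, A.SucceedsBy ⊤ ω u v t) →
        ENNReal.ofReal a ≤
          perc (Sym2 (Fin n)) (c / n) {ω | OpenConn (⊤ : SimpleGraph (Fin n)) ω u v} →
        (∀ k : ℕ,
          (perc (Sym2 (Fin n)) (c / n))[|{ω | OpenConn (⊤ : SimpleGraph (Fin n)) ω u v}]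
              {ω | ∃ s < k, A.SucceedsBy ⊤ ω u v s}
            ≤ ENNReal.ofReal (K * Real.sqrt k / n)) ∧
        ENNReal.ofReal (K' * n ^ 2) ≤
          ∫⁻ ω, ((sInf {t | A.SucceedsBy (⊤ : SimpleGraph (Fin n)) ω u v t} : ℕ) : ℝ≥0∞)
            ∂((perc (Sym2 (Fin n)) (c / n))[|{ω |
                OpenConn (⊤ : SimpleGraph (Fin n)) ω u v}]) := by
  have hc₀ : 0 < c := zero_lt_one.trans hc
  refine ⟨5 * c / a, by positivity, 1 / (16 * (5 * c / a) ^ 2), by positivity, ?_⟩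
  intro n _ u v huv A hloc hcorr hconn
  set μ := perc (Sym2 (Fin n)) (c / n)
  set conn := {ω : Sym2 (Fin n) → Bool | OpenConn ⊤ ω u v}
  have hμconn : μ conn ≠ 0 := ((ENNReal.ofReal_pos.2 ha).trans_le hconn).ne'
  have hlt : ∀ k : ℕ, μ[|conn] {ω | ∃ s < k, A.SucceedsBy ⊤ ω u v s}
      ≤ ENNReal.ofReal (5 * c / a * √k / n) := fun k =>
    (A.cond_exists_succeedsBy_lt_le (by positivity) ha hloc huv hconn k).trans_eq
      (by congr 1; ring)
  refine ⟨hlt, ?_⟩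
  have := cond_isProbabilityMeasure hμconn
  have hsucc : ∀ᵐ ω ∂μ[|conn], {t | A.SucceedsBy ⊤ ω u v t}.Nonempty :=
    (ae_cond_mem .of_discrete).mono hcorr
  have hT₁ : ∀ᵐ ω ∂μ[|conn], 1 ≤ sInf {t | A.SucceedsBy ⊤ ω u v t} :=
    hsucc.mono fun ω hω => le_csInf hω fun t ht =>
      Nat.one_le_iff_ne_zero.2 fun h0 => A.not_succeedsBy_zero huv (h0 ▸ ht)
  have htail : ∀ k : ℕ, μ[|conn] {ω | sInf {t | A.SucceedsBy ⊤ ω u v t} < k}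
      ≤ ENNReal.ofReal (5 * c / a / n * √k) := fun k =>
    (measure_mono_ae (hsucc.mono fun ω hω (h : sInf _ < k) => ⟨_, h, Nat.sInf_mem hω⟩)).trans
      ((hlt k).trans_eq (by ring_nf))
  convert le_lintegral_of_measure_lt_le_mul_sqrt .of_discrete hT₁ (by positivity) htail using 2
  field_simp
end
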